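/- arXiv:2511.13433 — 5 statements merged into one kernel-verified Lean document; each statement's English description precedes it below -/
import Mathlib

section
/- (Outcome-regression identification with a standard reference, r ∈ {0,1}.) Let r ∈ {0,1} and d = 1 − r. Assume ignorability for Y(r) and that p_r > 0 almost surely. Then E[Y(r)·𝟙{D = d}] = E[g_r·𝟙{D = d}], and consequently the unexplained part satisfies Δ_S^{r,d} = E[(Y^obs − g_r)·𝟙{D = d}] / P(D = d). -/
open MeasureTheory ProbabilityTheory

/-- `E[Z | D = d]`: the conditional mean of `Z` given group membership `D = d`,
i.e. `E[Z · 𝟙{D = d}] / P(D = d)`. -/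
noncomputable def condMean {Ω : Type*} {m : MeasurableSpace Ω} (P : Measure Ω)
    (Z : Ω → ℝ) (D : Ω → ℕ) (d : ℕ) : ℝ :=
  (∫ ω, Z ω * (if D ω = d then (1:ℝ) else 0) ∂P) / (P {ω | D ω = d}).toReal

/-- `p_r`: the propensity score of group `r` (`p₁` if `r = 1`, and `p₀ = 1 - p₁` if `r = 0`). -/
noncomputable def pscore {Ω : Type*} (p₁ : Ω → ℝ) (r : ℕ) (ω : Ω) : ℝ :=
  if r = 1 then p₁ ω else 1 - p₁ ω

/-- If two nonnegative bounded weights `ρ₁ ρ₂` integrate `1_s (f ω)` identically for every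
measurable `s`, then they integrate `f` identically. -/
lemma lemA {Ω : Type*} {mΩ : MeasurableSpace Ω} (μ : Measure Ω) [IsFiniteMeasure μ]
    (f ρ₁ ρ₂ : Ω → ℝ) (hf : Measurable f)
    (hρ₁ : Measurable ρ₁) (hρ₂ : Measurable ρ₂)
    (h₁0 : ∀ ω, 0 ≤ ρ₁ ω) (h₁1 : ∀ ω, ρ₁ ω ≤ 1)
    (h₂0 : ∀ ω, 0 ≤ ρ₂ ω) (h₂1 : ∀ ω, ρ₂ ω ≤ 1)
    (h : ∀ s : Set ℝ, MeasurableSet s →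
      ∫ ω, Set.indicator s (fun _ => (1:ℝ)) (f ω) * ρ₁ ω ∂μ
        = ∫ ω, Set.indicator s (fun _ => (1:ℝ)) (f ω) * ρ₂ ω ∂μ) :
    ∫ ω, f ω * ρ₁ ω ∂μ = ∫ ω, f ω * ρ₂ ω ∂μ := by
  have key : ∀ ρ : Ω → ℝ, Measurable ρ → (∀ ω, 0 ≤ ρ ω) → (∀ ω, ρ ω ≤ 1) →
      ∀ s : Set ℝ, MeasurableSet s →
      (μ.withDensity fun ω => ((ρ ω).toNNReal : ENNReal)).map f s
        = ENNReal.ofReal (∫ ω, Set.indicator s (fun _ => (1:ℝ)) (f ω) * ρ ω ∂μ) := by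
    intro ρ hρ h0 h1 s hs
    rw [Measure.map_apply hf hs, withDensity_apply _ (hf hs)]
    have hint : Integrable ρ (μ.restrict (f ⁻¹' s)) := by
      refine (integrable_const (1:ℝ)).mono' hρ.aestronglyMeasurable.restrict ?_
      exact Filter.Eventually.of_forall fun ω => by
        rw [Real.norm_eq_abs, abs_of_nonneg (h0 ω)]; exact h1 ω
    have h2 : ∫⁻ ω in f ⁻¹' s, ((ρ ω).toNNReal : ENNReal) ∂μ
        = ENNReal.ofReal (∫ ω in f ⁻¹' s, ρ ω ∂μ) := by
      rw [ofReal_integral_eq_lintegral_ofReal hint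
        (Filter.Eventually.of_forall fun ω => h0 ω)]
      rfl
    rw [h2]
    congr 1
    rw [← integral_indicator (hf hs)]
    congr 1
    funext ω
    by_cases hω : f ω ∈ s <;>
      simp [Set.indicator_apply, hω, Set.mem_preimage]
  set ν₁ := (μ.withDensity fun ω => ((ρ₁ ω).toNNReal : ENNReal)).map f with hν₁
  set ν₂ := (μ.withDensity fun ω => ((ρ₂ ω).toNNReal : ENNReal)).map f with hν₂
  have hν : ν₁ = ν₂ := by
    ext s hs
    rw [hν₁, hν₂, key ρ₁ hρ₁ h₁0 h₁1 s hs, key ρ₂ hρ₂ h₂0 h₂1 s hs, h s hs]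
  have hrepr : ∀ ρ : Ω → ℝ, Measurable ρ → (∀ ω, 0 ≤ ρ ω) →
      ∫ x, x ∂((μ.withDensity fun ω => ((ρ ω).toNNReal : ENNReal)).map f)
        = ∫ ω, f ω * ρ ω ∂μ := by
    intro ρ hρ h0
    rw [show (fun x : ℝ => x) = id from rfl] at *
    rw [integral_map hf.aemeasurable aestronglyMeasurable_id]
    simp only [id_eq]
    rw [integral_withDensity_eq_integral_smul (by exact hρ.real_toNNReal) f]
    congr 1
    funext ω
    rw [NNReal.smul_def, Real.coe_toNNReal _ (h0 ω), smul_eq_mul, mul_comm]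
  rw [← hrepr ρ₁ hρ₁ h₁0, ← hrepr ρ₂ hρ₂ h₂0, ← hν₁, ← hν₂, hν]

/-- Integral form of the pull-out property. -/
lemma pullout_int {Ω : Type*} (m : MeasurableSpace Ω) {mΩ : MeasurableSpace Ω}
    (μ : Measure Ω) (hm : m ≤ mΩ) [SigmaFinite (μ.trim hm)]
    (b f : Ω → ℝ) (hb : StronglyMeasurable[m] b)
    (hbf : Integrable (fun ω => b ω * f ω) μ) (hf : Integrable f μ) :
    ∫ ω, b ω * f ω ∂μ = ∫ ω, b ω * (μ[f|m]) ω ∂μ := by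
  have h := condExp_mul_of_stronglyMeasurable_left hb (show Integrable (b * f) μ from hbf) hf
  calc ∫ ω, b ω * f ω ∂μ = ∫ ω, (μ[b * f|m]) ω ∂μ := (integral_condExp hm).symm
    _ = ∫ ω, b ω * (μ[f|m]) ω ∂μ := integral_congr_ae h

/-- Bounded factor times integrable function is integrable. -/
lemma int_mul_bdd {Ω : Type*} {mΩ : MeasurableSpace Ω} {μ : Measure Ω} {f ρ : Ω → ℝ}
    (hfi : Integrable f μ) (hρ : AEStronglyMeasurable ρ μ) (hb : ∀ᵐ ω ∂μ, |ρ ω| ≤ 1) :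
    Integrable (fun ω => f ω * ρ ω) μ := by
  refine hfi.abs.mono' (hfi.aestronglyMeasurable.mul hρ) ?_
  filter_upwards [hb] with ω hω
  rw [Real.norm_eq_abs, abs_mul]
  exact mul_le_of_le_one_right (abs_nonneg _) hω

/-- Product formula for the conditional expectation from conditional independence at the level
of sets. -/
lemma lemL {Ω : Type*} (m : MeasurableSpace Ω) {mΩ : MeasurableSpace Ω}
    (μ : Measure Ω) [IsProbabilityMeasure μ] (hm : m ≤ mΩ)
    (f : Ω → ℝ) (hf : Measurable f) (hfi : Integrable f μ)
    (T : Set Ω) (hT : MeasurableSet T)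
    (H : ∀ s : Set ℝ, MeasurableSet s →
      (μ⟦f ⁻¹' s ∩ T | m⟧) =ᵐ[μ] fun ω => (μ⟦f ⁻¹' s | m⟧) ω * (μ⟦T | m⟧) ω) :
    μ[fun ω => f ω * T.indicator (fun _ => (1:ℝ)) ω | m]
      =ᵐ[μ] fun ω => (μ[f | m]) ω * (μ⟦T | m⟧) ω := by
  haveI : IsFiniteMeasure (μ.trim hm) := isFiniteMeasure_trim hm
  set w : Ω → ℝ := μ⟦T | m⟧ with hw
  have hwsm : StronglyMeasurable[m] w := stronglyMeasurable_condExp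
  set w' : Ω → ℝ := fun ω => max 0 (min (w ω) 1) with hw'
  have hw'sm : StronglyMeasurable[m] w' :=
    (measurable_const.max ((hwsm.measurable.min measurable_const))).stronglyMeasurable
  have hindT_int : Integrable (T.indicator fun _ => (1:ℝ)) μ :=
    (integrable_const (1:ℝ)).indicator hT
  have hindT_nonneg : ∀ ω, 0 ≤ T.indicator (fun _ => (1:ℝ)) ω :=
    fun ω => Set.indicator_nonneg (fun _ _ => zero_le_one) ω
  have hindT_le : ∀ ω, T.indicator (fun _ => (1:ℝ)) ω ≤ 1 := fun ω => by
    by_cases hω : ω ∈ T <;> simp [Set.indicator_apply, hω]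
  have hw0 : 0 ≤ᵐ[μ] w := condExp_nonneg (Filter.Eventually.of_forall hindT_nonneg)
  have hw1 : w ≤ᵐ[μ] fun _ => (1:ℝ) := by
    have h1 := condExp_mono (μ := μ) (m := m) hindT_int (integrable_const (1:ℝ))
      (Filter.Eventually.of_forall hindT_le)
    rwa [condExp_const hm] at h1
  have hww' : w =ᵐ[μ] w' := by
    filter_upwards [hw0, hw1] with ω h0 h1
    simp only [Pi.zero_apply] at h0
    simp only [hw', min_eq_left h1, max_eq_right h0]
  have hw'0 : ∀ ω, 0 ≤ w' ω := fun ω => le_max_left _ _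
  have hw'1 : ∀ ω, w' ω ≤ 1 := fun ω => max_le zero_le_one (min_le_right _ _)
  -- the target function
  have hfT_int : Integrable (fun ω => f ω * T.indicator (fun _ => (1:ℝ)) ω) μ :=
    int_mul_bdd hfi (stronglyMeasurable_const.indicator hT).aestronglyMeasurable
      (Filter.Eventually.of_forall fun ω => by
        rw [abs_of_nonneg (hindT_nonneg ω)]; exact hindT_le ω)
  have hg_int : Integrable (fun ω => (μ[f|m]) ω * w ω) μ :=
    int_mul_bdd integrable_condExp ((hwsm.mono hm).aestronglyMeasurable)
      (by filter_upwards [hw0, hw1] with ω h0 h1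
          simp only [Pi.zero_apply] at h0
          rw [abs_of_nonneg h0]; exact h1)
  refine (ae_eq_condExp_of_forall_setIntegral_eq hm hfT_int
    (fun s _ _ => hg_int.integrableOn) (fun s hs _ => ?_)
    ((stronglyMeasurable_condExp.mul hwsm).aestronglyMeasurable)).symm
  -- key computation on a fixed m-measurable set s
  set b : Ω → ℝ := fun ω => w' ω * s.indicator (fun _ => (1:ℝ)) ω with hb
  have hbsm : StronglyMeasurable[m] b :=
    hw'sm.mul (stronglyMeasurable_const.indicator hs)
  have hinds_nonneg : ∀ ω, 0 ≤ s.indicator (fun _ => (1:ℝ)) ω :=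
    fun ω => Set.indicator_nonneg (fun _ _ => zero_le_one) ω
  have hinds_le : ∀ ω, s.indicator (fun _ => (1:ℝ)) ω ≤ 1 := fun ω => by
    by_cases hω : ω ∈ s <;> simp [Set.indicator_apply, hω]
  have hb0 : ∀ ω, 0 ≤ b ω := fun ω => mul_nonneg (hw'0 ω) (hinds_nonneg ω)
  have hb1 : ∀ ω, b ω ≤ 1 := fun ω =>
    mul_le_one₀ (hw'1 ω) (hinds_nonneg ω) (hinds_le ω)
  have hbmeas : Measurable b := (hbsm.mono hm).measurable
  -- `key`: for any integrable h, ∫_s μ[h|m]·w = ∫ h·b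
  have key : ∀ h : Ω → ℝ, Integrable h μ →
      ∫ ω in s, (μ[h|m]) ω * w ω ∂μ = ∫ ω, h ω * b ω ∂μ := by
    intro h hint
    have e1 : ∫ ω in s, (μ[h|m]) ω * w ω ∂μ
        = ∫ ω, s.indicator (fun ω => (μ[h|m]) ω * w ω) ω ∂μ :=
      (integral_indicator (hm s hs)).symm
    rw [e1]
    have e2 : (fun ω => s.indicator (fun ω => (μ[h|m]) ω * w ω) ω)
        =ᵐ[μ] fun ω => b ω * (μ[h|m]) ω := by
      filter_upwards [hww'] with ω hωw
      by_cases hω : ω ∈ s <;>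
        simp [Set.indicator_apply, hω, hb, ← hωw] <;> ring
    rw [integral_congr_ae e2]
    rw [← pullout_int m μ hm b h hbsm
      (by
        have h2 := int_mul_bdd hint (hbmeas.aestronglyMeasurable)
          (Filter.Eventually.of_forall fun ω => by
            rw [abs_of_nonneg (hb0 ω)]; exact hb1 ω)
        exact h2.congr (Filter.Eventually.of_forall fun ω => by ring)) hint]
    exact integral_congr_ae (Filter.Eventually.of_forall fun ω => by ring)
  -- apply lemA
  have hA : ∫ ω, f ω * (T.indicator (fun _ => (1:ℝ)) ω * s.indicator (fun _ => (1:ℝ)) ω) ∂μ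
      = ∫ ω, f ω * b ω ∂μ := by
    refine lemA μ f _ b hf
      ((measurable_const.indicator hT).mul (measurable_const.indicator (hm s hs))) hbmeas
      (fun ω => mul_nonneg (hindT_nonneg ω) (hinds_nonneg ω))
      (fun ω => mul_le_one₀ (hindT_le ω) (hinds_nonneg ω) (hinds_le ω))
      hb0 hb1 ?_
    intro u hu
    have hind_int : Integrable ((f ⁻¹' u).indicator fun _ => (1:ℝ)) μ :=
      (integrable_const (1:ℝ)).indicator (hf hu)
    have e1 : (fun ω => u.indicator (fun _ => (1:ℝ)) (f ω)
          * (T.indicator (fun _ => (1:ℝ)) ω * s.indicator (fun _ => (1:ℝ)) ω))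
        = fun ω => s.indicator (fun ω => ((f ⁻¹' u) ∩ T).indicator (fun _ => (1:ℝ)) ω) ω := by
      funext ω
      by_cases h1 : f ω ∈ u <;> by_cases h2 : ω ∈ T <;> by_cases h3 : ω ∈ s <;>
        simp [Set.indicator_apply, h1, h2, h3, Set.mem_preimage]
    rw [e1, integral_indicator (hm s hs),
      ← setIntegral_condExp hm ((integrable_const (1:ℝ)).indicator ((hf hu).inter hT)) hs]
    have e2 : ∫ ω in s, (μ⟦f ⁻¹' u ∩ T | m⟧) ω ∂μ
        = ∫ ω in s, (μ⟦f ⁻¹' u | m⟧) ω * w ω ∂μ :=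
      integral_congr_ae (ae_restrict_of_ae (H u hu))
    rw [e2, key _ hind_int]
    refine integral_congr_ae (Filter.Eventually.of_forall fun ω => ?_)
    by_cases h1 : f ω ∈ u <;> simp [Set.indicator_apply, h1, Set.mem_preimage]
  -- finish
  have e3 : ∫ ω in s, (μ[f|m]) ω * w ω ∂μ = ∫ ω, f ω * b ω ∂μ := key f hfi
  have e4 : ∫ ω in s, f ω * T.indicator (fun _ => (1:ℝ)) ω ∂μ
      = ∫ ω, f ω * (T.indicator (fun _ => (1:ℝ)) ω * s.indicator (fun _ => (1:ℝ)) ω) ∂μ := by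
    rw [← integral_indicator (hm s hs)]
    refine integral_congr_ae (Filter.Eventually.of_forall fun ω => ?_)
    by_cases h3 : ω ∈ s <;> simp [Set.indicator_apply, h3]
  rw [e3, e4, hA]

/-- Transfer conditional independence along an a.e. modification of the first function. -/
lemma condIndepFun_ae_eq {Ω : Type*} (m : MeasurableSpace Ω) {mΩ : MeasurableSpace Ω}
    [StandardBorelSpace Ω] (μ : Measure Ω) [IsProbabilityMeasure μ] (hm : m ≤ mΩ)
    (f f' : Ω → ℝ) (hff' : f =ᵐ[μ] f') (D : Ω → ℕ)
    (h : CondIndepFun m hm f D μ) : CondIndepFun m hm f' D μ := by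
  have hnull : μ {ω | ¬ f ω = f' ω} = 0 := hff'
  obtain ⟨N, hNsub, hNm, hNz⟩ := exists_measurable_superset_of_null hnull
  have hPN : (μ⟦N | m⟧) =ᵐ[μ] 0 := by
    have hind : (N.indicator fun _ => (1:ℝ)) =ᵐ[μ] 0 := by
      filter_upwards [measure_eq_zero_iff_ae_notMem.mp hNz] with ω hω
      simp [Set.indicator_apply, hω]
    refine (condExp_congr_ae hind).trans ?_
    rw [condExp_zero]
  have hPNtrim : (μ⟦N | m⟧) =ᵐ[μ.trim hm] 0 :=
    (StronglyMeasurable.ae_eq_trim_iff hm stronglyMeasurable_condExp stronglyMeasurable_const).mpr hPN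
  have hκN : ∀ᵐ ω ∂(μ.trim hm), (condExpKernel μ m ω).real N = 0 := by
    filter_upwards [condExpKernel_ae_eq_trim_condExp hm hNm, hPNtrim] with ω h1 h2
    rw [h2] at h1
    simpa [measureReal_def, ENNReal.toReal_eq_zero_iff, (measure_ne_top (condExpKernel μ m ω) N)] using h1
  have hfae : ∀ᵐ ω ∂(μ.trim hm), f =ᵐ[condExpKernel μ m ω] f' := by
    filter_upwards [hκN] with ω hω
    refine Filter.eventually_of_mem (mem_ae_iff.mpr (measure_mono_null ?_ (by simpa [measureReal_def, ENNReal.toReal_eq_zero_iff, (measure_ne_top (condExpKernel μ m ω) N)] using hω))) (fun a ha => ha)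
    intro a ha
    exact hNsub ha
  exact Kernel.IndepFun.congr' h hfae (Filter.Eventually.of_forall fun ω => Filter.EventuallyEq.rfl)

theorem main_aux {Ω : Type*} (𝒢 : MeasurableSpace Ω) {mΩ : MeasurableSpace Ω}
    [StandardBorelSpace Ω] (P : Measure Ω) [IsProbabilityMeasure P] (h𝒢le : 𝒢 ≤ mΩ)
    (D : Ω → ℕ) (hD : Measurable D)
    (Y Yobs : Ω → ℝ) (r d : ℕ)
    (hYint : Integrable Y P)
    (hobs_r : ∀ ω, Yobs ω * (if D ω = r then (1:ℝ) else 0)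
      = Y ω * (if D ω = r then (1:ℝ) else 0))
    (pr : Ω → ℝ)
    (hprc : pr =ᵐ[P] P⟦D ⁻¹' {r} | 𝒢⟧)
    (hprpos : ∀ᵐ ω ∂P, 0 < pr ω)
    (higr : CondIndepFun 𝒢 h𝒢le Y D P)
    (gr : Ω → ℝ) (hgrmeas : Measurable[𝒢] gr) (hgrint : Integrable gr P)
    (hgr : (fun ω => gr ω * pr ω)
      =ᵐ[P] P[fun ω => Yobs ω * (if D ω = r then (1:ℝ) else 0) | 𝒢]) :
    ∫ ω, Y ω * (if D ω = d then (1:ℝ) else 0) ∂P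
      = ∫ ω, gr ω * (if D ω = d then (1:ℝ) else 0) ∂P := by
  haveI : IsFiniteMeasure (P.trim h𝒢le) := isFiniteMeasure_trim h𝒢le
  obtain ⟨f', hf'sm, hff'⟩ := hYint.aestronglyMeasurable
  have hf' : Measurable f' := hf'sm.measurable
  have hf'int : Integrable f' P := hYint.congr hff'
  have hcif' : CondIndepFun 𝒢 h𝒢le f' D P := condIndepFun_ae_eq 𝒢 P h𝒢le Y f' hff' D higr
  have H := (condIndepFun_iff_condExp_inter_preimage_eq_mul hf' hD).mp hcif'
  have hindr : ∀ ω, (D ⁻¹' {r}).indicator (fun _ => (1:ℝ)) ω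
      = (if D ω = r then (1:ℝ) else 0) := fun ω => by
    by_cases h : D ω = r <;> simp [Set.indicator_apply, h]
  have hindd : ∀ ω, (D ⁻¹' {d}).indicator (fun _ => (1:ℝ)) ω
      = (if D ω = d then (1:ℝ) else 0) := fun ω => by
    by_cases h : D ω = d <;> simp [Set.indicator_apply, h]
  have hTr : MeasurableSet (D ⁻¹' {r}) := hD (measurableSet_singleton r)
  have hTd : MeasurableSet (D ⁻¹' {d}) := hD (measurableSet_singleton d)
  have hLr := lemL 𝒢 P h𝒢le f' hf' hf'int _ hTr
    (fun s hs => H s {r} hs (measurableSet_singleton r))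
  have hLd := lemL 𝒢 P h𝒢le f' hf' hf'int _ hTd
    (fun s hs => H s {d} hs (measurableSet_singleton d))
  -- step (a): gr =ᵐ P[f'|𝒢]
  have ea : (fun ω => Yobs ω * (if D ω = r then (1:ℝ) else 0))
      =ᵐ[P] fun ω => f' ω * (D ⁻¹' {r}).indicator (fun _ => (1:ℝ)) ω := by
    filter_upwards [hff'] with ω hω
    rw [hobs_r ω, hω, hindr ω]
  have hgrchain : (fun ω => gr ω * pr ω) =ᵐ[P] fun ω => (P[f'|𝒢]) ω * pr ω := by
    have h1 : (fun ω => gr ω * pr ω)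
        =ᵐ[P] fun ω => (P[f'|𝒢]) ω * (P⟦D ⁻¹' {r}|𝒢⟧) ω :=
      hgr.trans ((condExp_congr_ae ea).trans hLr)
    filter_upwards [h1, hprc] with ω h hp
    rw [hp] at h ⊢
    exact h
  have hgrae : gr =ᵐ[P] P[f'|𝒢] := by
    filter_upwards [hgrchain, hprpos] with ω h hpos
    exact mul_right_cancel₀ (ne_of_gt hpos) h
  -- integrabilities
  have hind_bd : ∀ ω, |(D ⁻¹' {d}).indicator (fun _ => (1:ℝ)) ω| ≤ 1 := fun ω => by
    by_cases h : ω ∈ D ⁻¹' {d} <;> simp [Set.indicator_apply, h]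
  have hindd_asm : AEStronglyMeasurable ((D ⁻¹' {d}).indicator fun _ => (1:ℝ)) P :=
    (stronglyMeasurable_const.indicator hTd).aestronglyMeasurable
  have hf'Td_int : Integrable (fun ω => f' ω * (D ⁻¹' {d}).indicator (fun _ => (1:ℝ)) ω) P :=
    int_mul_bdd hf'int hindd_asm (Filter.Eventually.of_forall hind_bd)
  have hgrTd_int : Integrable (fun ω => gr ω * (D ⁻¹' {d}).indicator (fun _ => (1:ℝ)) ω) P :=
    int_mul_bdd hgrint hindd_asm (Filter.Eventually.of_forall hind_bd)
  have hind_int : Integrable ((D ⁻¹' {d}).indicator fun _ => (1:ℝ)) P :=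
    (integrable_const (1:ℝ)).indicator hTd
  -- chain of integral identities
  calc ∫ ω, Y ω * (if D ω = d then (1:ℝ) else 0) ∂P
      = ∫ ω, f' ω * (D ⁻¹' {d}).indicator (fun _ => (1:ℝ)) ω ∂P := by
        refine integral_congr_ae ?_
        filter_upwards [hff'] with ω hω
        rw [hω, hindd ω]
    _ = ∫ ω, (P[fun ω => f' ω * (D ⁻¹' {d}).indicator (fun _ => (1:ℝ)) ω|𝒢]) ω ∂P :=
        (integral_condExp h𝒢le).symm
    _ = ∫ ω, (P[f'|𝒢]) ω * (P⟦D ⁻¹' {d}|𝒢⟧) ω ∂P := integral_congr_ae hLd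
    _ = ∫ ω, gr ω * (P⟦D ⁻¹' {d}|𝒢⟧) ω ∂P := by
        refine integral_congr_ae ?_
        filter_upwards [hgrae] with ω hω
        rw [hω]
    _ = ∫ ω, gr ω * (D ⁻¹' {d}).indicator (fun _ => (1:ℝ)) ω ∂P :=
        (pullout_int 𝒢 P h𝒢le gr _ hgrmeas.stronglyMeasurable hgrTd_int hind_int).symm
    _ = ∫ ω, gr ω * (if D ω = d then (1:ℝ) else 0) ∂P := by
        refine integral_congr_ae (Filter.Eventually.of_forall fun ω => ?_)
        exact congrArg (fun z => gr ω * z) (hindd ω)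

/-- outcome-regression identification with a standard reference `r ∈ {0,1}`. -/
theorem stmt_2
    {Ω 𝒳 : Type*} (𝒢 : MeasurableSpace Ω) [mΩ : MeasurableSpace Ω] [StandardBorelSpace Ω]
    [MeasurableSpace 𝒳]
    (P : Measure Ω) [IsProbabilityMeasure P]
    (X : Ω → 𝒳) (hX : Measurable X)
    (h𝒢 : 𝒢 = MeasurableSpace.comap X inferInstance)
    (h𝒢le : 𝒢 ≤ mΩ)
    (D : Ω → ℕ) (hD : Measurable D) (hD01 : ∀ ω, D ω = 0 ∨ D ω = 1)
    (hD1pos : 0 < P {ω | D ω = 1}) (hD1lt : P {ω | D ω = 1} < 1)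
    (Y : ℕ → Ω → ℝ) (hY0int : Integrable (Y 0) P) (hY1int : Integrable (Y 1) P)
    (Yobs : Ω → ℝ)
    (hYobs : ∀ ω, Yobs ω = (D ω : ℝ) * Y 1 ω + (1 - (D ω : ℝ)) * Y 0 ω)
    (p₁ : Ω → ℝ) (hp₁meas : Measurable[𝒢] p₁)
    (hp₁ : p₁ =ᵐ[P] P[fun ω => (D ω : ℝ) | 𝒢])
    (hp₁0 : ∀ ω, 0 ≤ p₁ ω) (hp₁1 : ∀ ω, p₁ ω ≤ 1)
    (r d : ℕ) (hrd : (r = 0 ∧ d = 1) ∨ (r = 1 ∧ d = 0))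
    (higr : CondIndepFun 𝒢 h𝒢le (Y r) D (μ := P))
    (hprpos : ∀ᵐ ω ∂P, 0 < pscore p₁ r ω)
    (gr : Ω → ℝ) (hgrmeas : Measurable[𝒢] gr) (hgrint : Integrable gr P)
    (hgr : (fun ω => gr ω * pscore p₁ r ω)
      =ᵐ[P] P[fun ω => Yobs ω * (if D ω = r then (1:ℝ) else 0) | 𝒢]) :
    (∫ ω, Y r ω * (if D ω = d then (1:ℝ) else 0) ∂P
      = ∫ ω, gr ω * (if D ω = d then (1:ℝ) else 0) ∂P)
    ∧ condMean P (Y d) D d - condMean P (Y r) D d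
      = (∫ ω, (Yobs ω - gr ω) * (if D ω = d then (1:ℝ) else 0) ∂P)
        / (P {ω | D ω = d}).toReal := by
  have hDm : Measurable[mΩ] D := hD
  -- cast of D as indicator of {D = 1}
  have ecast : (fun ω => ((D ω : ℕ) : ℝ)) = (D ⁻¹' {1}).indicator (fun _ => (1:ℝ)) :=
    funext fun ω => by rcases hD01 ω with h | h <;> simp [Set.indicator_apply, h]
  have hDint : Integrable (fun ω => ((D ω : ℕ) : ℝ)) P := by
    rw [ecast]
    have h1 : AEStronglyMeasurable[mΩ] ((D ⁻¹' {1}).indicator (fun _ => (1:ℝ))) P :=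
      (stronglyMeasurable_const.indicator
        (hDm (measurableSet_singleton 1))).aestronglyMeasurable
    refine (integrable_const (1:ℝ)).mono' h1 ?_
    refine Filter.Eventually.of_forall fun ω => ?_
    by_cases h : ω ∈ D ⁻¹' {1} <;> simp [Set.indicator_apply, h]
  -- common facts depending on the case
  have hYrint : Integrable (Y r) P := by rcases hrd with ⟨rfl, rfl⟩ | ⟨rfl, rfl⟩ <;> assumption
  have hYdint : Integrable (Y d) P := by rcases hrd with ⟨rfl, rfl⟩ | ⟨rfl, rfl⟩ <;> assumption
  have hobs_r : ∀ ω, Yobs ω * (if D ω = r then (1:ℝ) else 0)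
      = Y r ω * (if D ω = r then (1:ℝ) else 0) := by
    intro ω
    rcases hrd with ⟨rfl, rfl⟩ | ⟨rfl, rfl⟩ <;> rcases hD01 ω with h | h <;>
      simp [hYobs ω, h]
  have hobs_d : ∀ ω, Yobs ω * (if D ω = d then (1:ℝ) else 0)
      = Y d ω * (if D ω = d then (1:ℝ) else 0) := by
    intro ω
    rcases hrd with ⟨rfl, rfl⟩ | ⟨rfl, rfl⟩ <;> rcases hD01 ω with h | h <;>
      simp [hYobs ω, h]
  have hprc : (pscore p₁ r) =ᵐ[P] P⟦D ⁻¹' {r} | 𝒢⟧ := by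
    rcases hrd with ⟨rfl, -⟩ | ⟨rfl, -⟩
    · -- r = 0 : pscore p₁ 0 = 1 - p₁
      have epsc : pscore p₁ 0 = fun ω => 1 - p₁ ω :=
        funext fun ω => if_neg (by norm_num)
      have e0 : ((D ⁻¹' {0}).indicator (fun _ => (1:ℝ)))
          = (fun _ => (1:ℝ)) - (fun ω => ((D ω : ℕ) : ℝ)) := by
        funext ω
        rcases hD01 ω with h | h <;>
          simp [Set.indicator_apply, Set.mem_preimage, Pi.sub_apply, h]
      have h2 : (P⟦D ⁻¹' {0} | 𝒢⟧)
          = P[(fun _ => (1:ℝ)) - (fun ω => ((D ω : ℕ) : ℝ)) | 𝒢] := by rw [e0]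
      have h3 := condExp_sub (m := 𝒢) (μ := P) (integrable_const (1:ℝ)) hDint
      rw [epsc, h2]
      refine Filter.EventuallyEq.symm ?_
      refine h3.trans ?_
      rw [condExp_const h𝒢le]
      filter_upwards [hp₁] with ω h
      simp only [Pi.sub_apply]
      rw [← h]
    · -- r = 1 : pscore p₁ 1 = p₁
      have epsc : pscore p₁ 1 = p₁ := funext fun ω => if_pos rfl
      rw [epsc]
      refine hp₁.trans (Filter.EventuallyEq.of_eq ?_)
      rw [ecast]
  have part1 := main_aux 𝒢 P h𝒢le D hDm (Y r) Yobs r d hYrint hobs_r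
    (pscore p₁ r) hprc hprpos higr gr hgrmeas hgrint hgr
  refine ⟨part1, ?_⟩
  -- part 2
  have hTd : MeasurableSet[mΩ] (D ⁻¹' {d}) := hDm (measurableSet_singleton d)
  have hJ : (fun ω => (if D ω = d then (1:ℝ) else 0))
      = (D ⁻¹' {d}).indicator (fun _ => (1:ℝ)) :=
    funext fun ω => by by_cases h : D ω = d <;> simp [Set.indicator_apply, h]
  have hJasm : AEStronglyMeasurable[mΩ] (fun ω => (if D ω = d then (1:ℝ) else 0)) P := by
    rw [hJ]
    exact (stronglyMeasurable_const.indicator hTd).aestronglyMeasurable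
  have hJbd : ∀ᵐ ω ∂P, |(if D ω = d then (1:ℝ) else 0)| ≤ 1 :=
    Filter.Eventually.of_forall fun ω => by by_cases h : D ω = d <;> simp [h]
  have hYobs_int : Integrable (fun ω => Yobs ω * (if D ω = d then (1:ℝ) else 0)) P := by
    have := int_mul_bdd hYdint hJasm hJbd
    exact this.congr (Filter.Eventually.of_forall fun ω => (hobs_d ω).symm)
  have hgrd_int : Integrable (fun ω => gr ω * (if D ω = d then (1:ℝ) else 0)) P :=
    int_mul_bdd hgrint hJasm hJbd
  have hsub : ∫ ω, (Yobs ω - gr ω) * (if D ω = d then (1:ℝ) else 0) ∂P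
      = ∫ ω, Yobs ω * (if D ω = d then (1:ℝ) else 0) ∂P
        - ∫ ω, gr ω * (if D ω = d then (1:ℝ) else 0) ∂P := by
    rw [← integral_sub hYobs_int hgrd_int]
    refine integral_congr_ae (Filter.Eventually.of_forall fun ω => ?_)
    ring
  have hnum1 : ∫ ω, Y d ω * (if D ω = d then (1:ℝ) else 0) ∂P
      = ∫ ω, Yobs ω * (if D ω = d then (1:ℝ) else 0) ∂P :=
    integral_congr_ae (Filter.Eventually.of_forall fun ω => (hobs_d ω).symm)
  rw [condMean, condMean, hnum1, part1, hsub, sub_div]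
end

section
/- (Outcome-regression identification with the equilibrium reference, r = 2.) Assume ignorability for Y(0) and ignorability for Y(1). Then for each d ∈ {0,1}, E[Y(2)·𝟙{D = d}] = E[g₂·𝟙{D = d}], and consequently the unexplained part satisfies Δ_S^{2,d} = E[(Y^obs − g₂)·𝟙{D = d}] / P(D = d). No common-support condition on p₁ is required. -/
open MeasureTheory ProbabilityTheory

section AuxLemmas

variable {Ω : Type*}

lemma integrable_indicator_one {mΩ : MeasurableSpace Ω} {P : Measure Ω}
    [IsFiniteMeasure P] {s : Set Ω} (hs : MeasurableSet s) :
    Integrable (s.indicator (fun _ => (1:ℝ))) P :=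
  (integrable_const (1:ℝ)).indicator hs

lemma integrable_mul_bdd {mΩ : MeasurableSpace Ω} {P : Measure Ω} {g b : Ω → ℝ} (hg : Integrable g P)
    (hb : AEStronglyMeasurable b P) (hbd : ∃ C, ∀ x, ‖b x‖ ≤ C) :
    Integrable (fun ω => g ω * b ω) P :=
  (hg.bdd_mul hb (c := hbd.choose) (Filter.Eventually.of_forall hbd.choose_spec)).congr (Filter.Eventually.of_forall fun x => mul_comm _ _)

lemma integrable_bdd_mul {mΩ : MeasurableSpace Ω} {P : Measure Ω} {g b : Ω → ℝ} {c : ℝ} (hg : Integrable g P)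
    (hb : AEStronglyMeasurable b P) (hbd : ∀ᵐ x ∂P, ‖b x‖ ≤ c) :
    Integrable (fun ω => b ω * g ω) P :=
  hg.bdd_mul hb hbd

/-- Pull-out property at the level of integrals: for `Z` a `𝒢`-strongly-measurable function,
`∫ Z·W = ∫ Z·E[W|𝒢]`. -/
lemma integral_mul_condexp {𝒢 mΩ : MeasurableSpace Ω} (h𝒢le : 𝒢 ≤ mΩ) (P : Measure Ω)
    [IsProbabilityMeasure P] {Z W : Ω → ℝ} (hZ : StronglyMeasurable[𝒢] Z)
    (hW : Integrable W P) (hZW : Integrable (fun ω => Z ω * W ω) P) :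
    ∫ ω, Z ω * W ω ∂P = ∫ ω, Z ω * (P[W|𝒢]) ω ∂P := by
  have hZW' : Integrable (Z * W) P := hZW
  have h1 : P[Z * W|𝒢] =ᵐ[P] Z * P[W|𝒢] := condExp_mul_of_stronglyMeasurable_left hZ hZW' hW
  calc ∫ ω, Z ω * W ω ∂P = ∫ ω, (P[Z * W|𝒢]) ω ∂P := (integral_condExp h𝒢le).symm
    _ = ∫ ω, Z ω * (P[W|𝒢]) ω ∂P := integral_congr_ae h1

/-- If `E[J₁ · I | 𝒢] = E[J₁|𝒢] · E[I|𝒢]` for every `m₁`-indicator `J₁`, then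
`E[I | m₁ ⊔ 𝒢] = E[I | 𝒢]`. -/
lemma condexp_indicator_sup {m₁ 𝒢 mΩ : MeasurableSpace Ω} (hm₁ : m₁ ≤ mΩ) (h𝒢le : 𝒢 ≤ mΩ)
    (P : Measure Ω) [IsProbabilityMeasure P]
    {I : Ω → ℝ} (hIint : Integrable I P) (hIbd : ∀ x, ‖I x‖ ≤ 1)
    (hprod : ∀ s₁, MeasurableSet[m₁] s₁ →
      P[fun ω => s₁.indicator (fun _ => (1:ℝ)) ω * I ω|𝒢]
        =ᵐ[P] fun ω => (P[s₁.indicator (fun _ => (1:ℝ))|𝒢]) ω * (P[I|𝒢]) ω) :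
    P[I|m₁ ⊔ 𝒢] =ᵐ[P] P[I|𝒢] := by
  have hm : m₁ ⊔ 𝒢 ≤ mΩ := sup_le hm₁ h𝒢le
  have h𝒢m : 𝒢 ≤ m₁ ⊔ 𝒢 := le_sup_right
  have hqint : Integrable (P[I|𝒢]) P := integrable_condExp
  set π : Set (Set Ω) :=
    {s | ∃ s₁ s₂, MeasurableSet[m₁] s₁ ∧ MeasurableSet[𝒢] s₂ ∧ s = s₁ ∩ s₂} with hπdef
  have hgen : m₁ ⊔ 𝒢 = MeasurableSpace.generateFrom π := by
    refine le_antisymm (sup_le ?_ ?_) (MeasurableSpace.generateFrom_le ?_)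
    · intro s hs
      exact MeasurableSpace.measurableSet_generateFrom
        ⟨s, Set.univ, hs, MeasurableSet.univ, (Set.inter_univ s).symm⟩
    · intro s hs
      exact MeasurableSpace.measurableSet_generateFrom
        ⟨Set.univ, s, MeasurableSet.univ, hs, (Set.univ_inter s).symm⟩
    · rintro s ⟨s₁, s₂, hs₁, hs₂, rfl⟩
      exact ((le_sup_left : m₁ ≤ m₁ ⊔ 𝒢) s₁ hs₁).inter (h𝒢m s₂ hs₂)
  have hπ : IsPiSystem π := by
    rintro s ⟨s₁, s₂, hs₁, hs₂, rfl⟩ t ⟨t₁, t₂, ht₁, ht₂, rfl⟩ -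
    exact ⟨s₁ ∩ t₁, s₂ ∩ t₂, hs₁.inter ht₁, hs₂.inter ht₂,
      Set.inter_inter_inter_comm s₁ s₂ t₁ t₂⟩
  have key : ∀ s : Set Ω, MeasurableSet[m₁ ⊔ 𝒢] s →
      ∫ x in s, (P[I|𝒢]) x ∂P = ∫ x in s, I x ∂P := by
    have h_empty : ∫ x in (∅ : Set Ω), (P[I|𝒢]) x ∂P = ∫ x in (∅ : Set Ω), I x ∂P := by simp
    have h_basic : ∀ t ∈ π, ∫ x in t, (P[I|𝒢]) x ∂P = ∫ x in t, I x ∂P := by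
      rintro t ⟨s₁, s₂, hs₁, hs₂, rfl⟩
      have hs₁' : MeasurableSet[mΩ] s₁ := hm₁ _ hs₁
      have hs₂' : MeasurableSet[mΩ] s₂ := h𝒢le _ hs₂
      have hJ₁int : Integrable (s₁.indicator (fun _ => (1:ℝ))) P :=
        (integrable_const (1:ℝ)).indicator hs₁'
      have hJ₂int : Integrable (s₂.indicator (fun _ => (1:ℝ))) P :=
        (integrable_const (1:ℝ)).indicator hs₂'
      have hJ₁bd : ∀ x, ‖s₁.indicator (fun _ => (1:ℝ)) x‖ ≤ 1 := fun x => by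
        by_cases h : x ∈ s₁ <;> simp [Set.indicator_apply, h]
      have hJ₂bd : ∀ x, ‖s₂.indicator (fun _ => (1:ℝ)) x‖ ≤ 1 := fun x => by
        by_cases h : x ∈ s₂ <;> simp [Set.indicator_apply, h]
      have hJ₂sm : StronglyMeasurable[𝒢] (s₂.indicator (fun _ => (1:ℝ))) :=
        stronglyMeasurable_const.indicator hs₂
      have hqsm : StronglyMeasurable[𝒢] (P[I|𝒢]) := stronglyMeasurable_condExp
      have hZsm : StronglyMeasurable[𝒢]
          (fun ω => s₂.indicator (fun _ => (1:ℝ)) ω * (P[I|𝒢]) ω) := hJ₂sm.mul hqsm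
      have hZint : Integrable (fun ω => s₂.indicator (fun _ => (1:ℝ)) ω * (P[I|𝒢]) ω) P :=
        hqint.bdd_mul hJ₂int.aestronglyMeasurable (Filter.Eventually.of_forall hJ₂bd)
      have hL : ∫ x in s₁ ∩ s₂, (P[I|𝒢]) x ∂P
          = ∫ ω, (s₂.indicator (fun _ => (1:ℝ)) ω * (P[I|𝒢]) ω)
              * (P[s₁.indicator (fun _ => (1:ℝ))|𝒢]) ω ∂P := by
        rw [← integral_indicator (hs₁'.inter hs₂')]
        have e : (s₁ ∩ s₂).indicator (P[I|𝒢])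
            = fun ω => (s₂.indicator (fun _ => (1:ℝ)) ω * (P[I|𝒢]) ω)
                * s₁.indicator (fun _ => (1:ℝ)) ω := by
          funext ω
          by_cases h1 : ω ∈ s₁ <;> by_cases h2 : ω ∈ s₂ <;>
            simp [Set.indicator_apply, h1, h2]
        rw [e]
        exact integral_mul_condexp h𝒢le P hZsm hJ₁int
          (integrable_mul_bdd hZint hJ₁int.aestronglyMeasurable ⟨1, hJ₁bd⟩)
      have hR : ∫ x in s₁ ∩ s₂, I x ∂P
          = ∫ ω, (s₂.indicator (fun _ => (1:ℝ)) ω * (P[I|𝒢]) ω)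
              * (P[s₁.indicator (fun _ => (1:ℝ))|𝒢]) ω ∂P := by
        rw [← integral_indicator (hs₁'.inter hs₂')]
        have e : (s₁ ∩ s₂).indicator I
            = fun ω => s₂.indicator (fun _ => (1:ℝ)) ω
                * (s₁.indicator (fun _ => (1:ℝ)) ω * I ω) := by
          funext ω
          by_cases h1 : ω ∈ s₁ <;> by_cases h2 : ω ∈ s₂ <;>
            simp [Set.indicator_apply, h1, h2]
        rw [e]
        have hW : Integrable (fun ω => s₁.indicator (fun _ => (1:ℝ)) ω * I ω) P :=
          integrable_mul_bdd hJ₁int hIint.aestronglyMeasurable ⟨1, hIbd⟩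
        rw [integral_mul_condexp h𝒢le P hJ₂sm hW
          (hW.bdd_mul hJ₂int.aestronglyMeasurable (Filter.Eventually.of_forall hJ₂bd))]
        refine integral_congr_ae ?_
        filter_upwards [hprod s₁ hs₁] with ω hω
        try dsimp only at hω ⊢
        rw [hω]
        ring
      rw [hL, hR]
    have h_compl : ∀ t, MeasurableSet[m₁ ⊔ 𝒢] t →
        (∫ x in t, (P[I|𝒢]) x ∂P = ∫ x in t, I x ∂P) →
        ∫ x in tᶜ, (P[I|𝒢]) x ∂P = ∫ x in tᶜ, I x ∂P := by
      intro t ht hCt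
      have ht' : MeasurableSet[mΩ] t := hm _ ht
      have e1 := integral_add_compl ht' hqint
      have e2 := integral_add_compl ht' hIint
      have e3 : ∫ x, (P[I|𝒢]) x ∂P = ∫ x, I x ∂P := integral_condExp h𝒢le
      linarith
    have h_union : ∀ g : ℕ → Set Ω, Pairwise (Function.onFun Disjoint g) →
        (∀ i, MeasurableSet[m₁ ⊔ 𝒢] (g i)) →
        (∀ i, ∫ x in g i, (P[I|𝒢]) x ∂P = ∫ x in g i, I x ∂P) →
        ∫ x in ⋃ i, g i, (P[I|𝒢]) x ∂P = ∫ x in ⋃ i, g i, I x ∂P := by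
      intro g hdisj hmeas hC
      rw [integral_iUnion (fun i => hm _ (hmeas i)) hdisj hqint.integrableOn,
        integral_iUnion (fun i => hm _ (hmeas i)) hdisj hIint.integrableOn]
      exact tsum_congr hC
    exact fun s hs =>
      MeasurableSpace.induction_on_inter (m := m₁ ⊔ 𝒢)
        (C := fun s _ => ∫ x in s, (P[I|𝒢]) x ∂P = ∫ x in s, I x ∂P) hgen hπ h_empty h_basic h_compl h_union s hs
  exact (ae_eq_condExp_of_forall_setIntegral_eq hm hIint
    (fun s _ _ => hqint.integrableOn) (fun s hs _ => key s hs)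
    (stronglyMeasurable_condExp.mono h𝒢m).aestronglyMeasurable).symm

/-- If `E[I | m₁ ⊔ 𝒢] = E[I|𝒢]` and `f` is `m₁`-measurable integrable, `I` bounded, then
`E[f·I|𝒢] = E[f|𝒢]·E[I|𝒢]`. -/
lemma condexp_mul_of_sup {m₁ 𝒢 mΩ : MeasurableSpace Ω} (hm₁ : m₁ ≤ mΩ) (h𝒢le : 𝒢 ≤ mΩ)
    (P : Measure Ω) [IsProbabilityMeasure P]
    {f I : Ω → ℝ} (hfm : Measurable[m₁] f) (hfint : Integrable f P)
    (hIint : Integrable I P) (hIbd : ∀ x, ‖I x‖ ≤ 1)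
    (hsup : P[I|m₁ ⊔ 𝒢] =ᵐ[P] P[I|𝒢]) :
    P[fun ω => f ω * I ω|𝒢] =ᵐ[P] fun ω => (P[f|𝒢]) ω * (P[I|𝒢]) ω := by
  have hm : m₁ ⊔ 𝒢 ≤ mΩ := sup_le hm₁ h𝒢le
  have h𝒢m : 𝒢 ≤ m₁ ⊔ 𝒢 := le_sup_right
  have hfm' : StronglyMeasurable[m₁ ⊔ 𝒢] f :=
    (hfm.mono (le_sup_left : m₁ ≤ m₁ ⊔ 𝒢) le_rfl).stronglyMeasurable
  have hfI : Integrable (fun ω => f ω * I ω) P :=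
    integrable_mul_bdd hfint hIint.aestronglyMeasurable ⟨1, hIbd⟩
  have hfI' : Integrable (f * I) P := hfI
  have hqbd : ∀ᵐ ω ∂P, ‖(P[I|𝒢]) ω‖ ≤ 1 := by
    have h := ae_bdd_condExp_of_ae_bdd (m := 𝒢) (μ := P) (R := 1)
      (Filter.Eventually.of_forall fun x => by
        simpa [Real.norm_eq_abs] using hIbd x)
    filter_upwards [h] with ω hω
    simpa [Real.norm_eq_abs] using hω
  have e1 : P[fun ω => f ω * I ω|𝒢] =ᵐ[P] P[P[fun ω => f ω * I ω|m₁ ⊔ 𝒢]|𝒢] :=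
    (condExp_condExp_of_le h𝒢m hm).symm
  have e2 : P[fun ω => f ω * I ω|m₁ ⊔ 𝒢] =ᵐ[P] fun ω => f ω * (P[I|m₁ ⊔ 𝒢]) ω :=
    condExp_mul_of_stronglyMeasurable_left hfm' hfI' hIint
  have e3 : P[fun ω => f ω * I ω|m₁ ⊔ 𝒢] =ᵐ[P] fun ω => f ω * (P[I|𝒢]) ω := by
    refine e2.trans ?_
    filter_upwards [hsup] with ω hω
    try dsimp only
    rw [hω]
  have e4 : P[fun ω => f ω * I ω|𝒢] =ᵐ[P] P[fun ω => (P[I|𝒢]) ω * f ω|𝒢] := by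
    refine e1.trans ((condExp_congr_ae e3).trans ?_)
    have : (fun ω => f ω * (P[I|𝒢]) ω) = fun ω => (P[I|𝒢]) ω * f ω :=
      funext fun ω => mul_comm _ _
    rw [this]
  have hqf : Integrable (fun ω => (P[I|𝒢]) ω * f ω) P :=
    hfint.bdd_mul integrable_condExp.aestronglyMeasurable hqbd
  have hqf' : Integrable ((P[I|𝒢]) * f) P := hqf
  have e5 : P[fun ω => (P[I|𝒢]) ω * f ω|𝒢] =ᵐ[P] fun ω => (P[I|𝒢]) ω * (P[f|𝒢]) ω :=
    condExp_mul_of_stronglyMeasurable_left stronglyMeasurable_condExp hqf' hfint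
  refine (e4.trans e5).trans ?_
  exact Filter.Eventually.of_forall fun ω => mul_comm _ _

/-- Conditional independence is stable under a.e. modification of the first function. -/
lemma condIndepFun_congr_ae {𝒢 mΩ : MeasurableSpace Ω} [StandardBorelSpace Ω] (h𝒢le : 𝒢 ≤ mΩ)
    {P : Measure Ω} [IsProbabilityMeasure P] {f f' : Ω → ℝ} {D : Ω → ℕ}
    (h : CondIndepFun 𝒢 h𝒢le f D (μ := P)) (hff' : f =ᵐ[P] f') :
    CondIndepFun 𝒢 h𝒢le f' D (μ := P) := by
  obtain ⟨N, hsub, hNmeas, hNnull⟩ := exists_measurable_superset_of_null (ae_iff.mp hff')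
  have hNind : (N.indicator (fun _ => (1:ℝ))) =ᵐ[P] (0 : Ω → ℝ) := by
    have hnm : ∀ᵐ x ∂P, x ∉ N := measure_eq_zero_iff_ae_notMem.mp hNnull
    filter_upwards [hnm] with x hx
    simp [Set.indicator_apply, hx]
  have h3 : P⟦N|𝒢⟧ =ᵐ[P] (0 : Ω → ℝ) := by
    have := condExp_congr_ae (m := 𝒢) (μ := P) hNind
    rwa [condExp_zero] at this
  have h2 := condExpKernel_ae_eq_trim_condExp (μ := P) h𝒢le hNmeas
  have h3' : P⟦N|𝒢⟧ =ᵐ[P.trim h𝒢le] (0 : Ω → ℝ) :=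
    (StronglyMeasurable.ae_eq_trim_iff h𝒢le stronglyMeasurable_condExp stronglyMeasurable_const).mpr h3
  have hker : ∀ᵐ ω ∂(P.trim h𝒢le), condExpKernel P 𝒢 ω N = 0 := by
    filter_upwards [h2, h3'] with ω hω h0ω
    have ht : (condExpKernel P 𝒢 ω N).toReal = 0 := by
      rw [← measureReal_def, hω, h0ω]
      rfl
    rcases (ENNReal.toReal_eq_zero_iff _).mp ht with h | h
    · exact h
    · exact absurd h (measure_ne_top _ _)
  refine Kernel.IndepFun.congr' h ?_
    (Filter.Eventually.of_forall fun a => Filter.EventuallyEq.rfl)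
  filter_upwards [hker] with ω hω
  refine ae_iff.mpr ?_
  exact measure_mono_null (fun x hx => hsub hx) hω

/-- Key product rule: if `f ⟂ D | 𝒢` then `E[f·𝟙{D=d}|𝒢] = E[f|𝒢]·E[𝟙{D=d}|𝒢]`. -/
lemma condexp_mul_indicator_of_condIndepFun {𝒢 mΩ : MeasurableSpace Ω}
    [StandardBorelSpace Ω] (h𝒢le : 𝒢 ≤ mΩ) (P : Measure Ω) [IsProbabilityMeasure P]
    {f : Ω → ℝ} (hfint : Integrable f P) {D : Ω → ℕ} (hD : Measurable D)
    (hindep : CondIndepFun 𝒢 h𝒢le f D (μ := P)) (d : ℕ) :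
    P[fun ω => f ω * (if D ω = d then (1:ℝ) else 0)|𝒢]
      =ᵐ[P] fun ω => (P[f|𝒢]) ω * (P[fun ω => if D ω = d then (1:ℝ) else 0|𝒢]) ω := by
  -- indicator facts
  have hIeq : (fun ω => if D ω = d then (1:ℝ) else 0)
      = (D ⁻¹' {d}).indicator (fun _ => (1:ℝ)) := by
    funext ω
    by_cases h : D ω = d
    · rw [if_pos h, Set.indicator_of_mem (by simpa using h)]
    · rw [if_neg h, Set.indicator_of_notMem (by simpa using h)]
  have hIeq2 : (fun ω => f ω * (if D ω = d then (1:ℝ) else 0))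
      = fun ω => f ω * (D ⁻¹' {d}).indicator (fun _ => (1:ℝ)) ω := by
    funext ω
    by_cases h : D ω = d
    · rw [if_pos h, Set.indicator_of_mem (by simpa using h)]
    · rw [if_neg h, Set.indicator_of_notMem (by simpa using h)]
  have hB : MeasurableSet (D ⁻¹' {d}) := hD (measurableSet_singleton d)
  have hIint : Integrable ((D ⁻¹' {d}).indicator (fun _ => (1:ℝ))) P :=
    (integrable_const (1:ℝ)).indicator hB
  have hIbd : ∀ x, ‖(D ⁻¹' {d}).indicator (fun _ => (1:ℝ)) x‖ ≤ 1 := fun x => by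
    by_cases h : x ∈ D ⁻¹' {d} <;> simp [Set.indicator_apply, h]
  -- measurable version of f
  set f' := hfint.aestronglyMeasurable.mk f with hf'def
  have hff' : f =ᵐ[P] f' := hfint.aestronglyMeasurable.ae_eq_mk
  have hf'm : Measurable f' := hfint.aestronglyMeasurable.stronglyMeasurable_mk.measurable
  have hf'int : Integrable f' P := hfint.congr hff'
  have hindep' : CondIndepFun 𝒢 h𝒢le f' D (μ := P) := condIndepFun_congr_ae h𝒢le hindep hff'
  -- the product rule for f'
  have hm₁ : MeasurableSpace.comap f' inferInstance ≤ mΩ := hf'm.comap_le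
  have hprod : ∀ s₁, MeasurableSet[MeasurableSpace.comap f' inferInstance] s₁ →
      P[fun ω => s₁.indicator (fun _ => (1:ℝ)) ω * (D ⁻¹' {d}).indicator (fun _ => (1:ℝ)) ω|𝒢]
        =ᵐ[P] fun ω => (P[s₁.indicator (fun _ => (1:ℝ))|𝒢]) ω
          * (P[(D ⁻¹' {d}).indicator (fun _ => (1:ℝ))|𝒢]) ω := by
    intro s₁ hs₁
    rw [MeasurableSpace.measurableSet_comap] at hs₁
    obtain ⟨u, hu, rfl⟩ := hs₁
    have h2 := ((condIndepFun_iff_condExp_inter_preimage_eq_mul hf'm hD).mp hindep')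
      u {d} hu (measurableSet_singleton d)
    have e : (fun ω => (f' ⁻¹' u).indicator (fun _ => (1:ℝ)) ω
        * (D ⁻¹' {d}).indicator (fun _ => (1:ℝ)) ω)
        = Set.indicator (f' ⁻¹' u ∩ D ⁻¹' {d}) (fun _ => (1:ℝ)) := by
      funext ω
      by_cases h1 : ω ∈ f' ⁻¹' u <;> by_cases hh2 : ω ∈ D ⁻¹' {d} <;>
        simp [Set.indicator_apply, h1, hh2, Set.mem_inter_iff]
    rw [e]
    exact h2
  have hsup := condexp_indicator_sup hm₁ h𝒢le P hIint hIbd hprod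
  have hfm₁ : Measurable[MeasurableSpace.comap f' inferInstance] f' := fun t ht => ⟨t, ht, rfl⟩
  have hmain := condexp_mul_of_sup hm₁ h𝒢le P hfm₁ hf'int hIint hIbd hsup
  -- transfer back from f' to f
  rw [hIeq2, hIeq]
  have t1 : P[fun ω => f ω * (D ⁻¹' {d}).indicator (fun _ => (1:ℝ)) ω|𝒢]
      =ᵐ[P] P[fun ω => f' ω * (D ⁻¹' {d}).indicator (fun _ => (1:ℝ)) ω|𝒢] := by
    refine condExp_congr_ae ?_
    filter_upwards [hff'] with ω hω
    try dsimp only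
    rw [hω]
  have t2 : (fun ω => (P[f'|𝒢]) ω * (P[(D ⁻¹' {d}).indicator (fun _ => (1:ℝ))|𝒢]) ω)
      =ᵐ[P] fun ω => (P[f|𝒢]) ω * (P[(D ⁻¹' {d}).indicator (fun _ => (1:ℝ))|𝒢]) ω := by
    filter_upwards [condExp_congr_ae (m := 𝒢) hff'.symm] with ω hω
    try dsimp only
    rw [hω]
  exact (t1.trans hmain).trans t2

end AuxLemmas

/-- outcome-regression identification with the equilibrium reference `r = 2`.
No common-support condition on `p₁` is required. -/
theorem stmt_3
    {Ω 𝒳 : Type*} (𝒢 : MeasurableSpace Ω) [mΩ : MeasurableSpace Ω] [StandardBorelSpace Ω]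
    [MeasurableSpace 𝒳]
    (P : Measure Ω) [IsProbabilityMeasure P]
    (X : Ω → 𝒳) (hX : Measurable X)
    (h𝒢 : 𝒢 = MeasurableSpace.comap X inferInstance)
    (h𝒢le : 𝒢 ≤ mΩ)
    (D : Ω → ℕ) (hD : Measurable D) (hD01 : ∀ ω, D ω = 0 ∨ D ω = 1)
    (hD1pos : 0 < P {ω | D ω = 1}) (hD1lt : P {ω | D ω = 1} < 1)
    (Y : ℕ → Ω → ℝ) (hY0int : Integrable (Y 0) P) (hY1int : Integrable (Y 1) P)
    (Yobs : Ω → ℝ)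
    (hYobs : ∀ ω, Yobs ω = (D ω : ℝ) * Y 1 ω + (1 - (D ω : ℝ)) * Y 0 ω)
    (p₁ : Ω → ℝ) (hp₁meas : Measurable[𝒢] p₁)
    (hp₁ : p₁ =ᵐ[P] P[fun ω => (D ω : ℝ) | 𝒢])
    (hp₁0 : ∀ ω, 0 ≤ p₁ ω) (hp₁1 : ∀ ω, p₁ ω ≤ 1)
    (hig0 : CondIndepFun 𝒢 h𝒢le (Y 0) D (μ := P))
    (hig1 : CondIndepFun 𝒢 h𝒢le (Y 1) D (μ := P))
    (Y2 : Ω → ℝ) (hY2 : ∀ ω, Y2 ω = p₁ ω * Y 1 ω + (1 - p₁ ω) * Y 0 ω)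
    (g₂ : Ω → ℝ) (hg₂meas : Measurable[𝒢] g₂) (hg₂int : Integrable g₂ P)
    (hg₂ : g₂ =ᵐ[P] P[Yobs | 𝒢]) :
    ∀ d : ℕ, d = 0 ∨ d = 1 →
      (∫ ω, Y2 ω * (if D ω = d then (1:ℝ) else 0) ∂P
        = ∫ ω, g₂ ω * (if D ω = d then (1:ℝ) else 0) ∂P)
      ∧ condMean P (Y d) D d - condMean P Y2 D d
        = (∫ ω, (Yobs ω - g₂ ω) * (if D ω = d then (1:ℝ) else 0) ∂P)
          / (P {ω | D ω = d}).toReal := by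
  -- basic facts about the indicator functions
  have hD' : Measurable[mΩ] D := hD
  have hImeas : ∀ e : ℕ, Measurable[mΩ] (fun ω => if D ω = e then (1:ℝ) else 0) := fun e =>
    Measurable.ite (hD' (measurableSet_singleton e)) measurable_const measurable_const
  have hIbd : ∀ (e : ℕ) (x : Ω), ‖(if D x = e then (1:ℝ) else 0)‖ ≤ 1 := fun e x => by
    by_cases h : D x = e <;> simp [h]
  have hIint : ∀ e : ℕ, Integrable (fun ω => if D ω = e then (1:ℝ) else 0) P := fun e => by
    have : (fun ω => if D ω = e then (1:ℝ) else 0)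
        = (D ⁻¹' {e}).indicator (fun _ => (1:ℝ)) := by
      funext ω
      by_cases h : D ω = e
      · rw [if_pos h, Set.indicator_of_mem (by simpa using h)]
      · rw [if_neg h, Set.indicator_of_notMem (by simpa using h)]
    rw [this]
    exact integrable_indicator_one (hD' (measurableSet_singleton e))
  -- bound on conditional expectations of indicators
  have hqbd : ∀ e : ℕ, ∀ᵐ ω ∂P, ‖(P[fun ω => if D ω = e then (1:ℝ) else 0|𝒢]) ω‖ ≤ 1 := by
    intro e
    have h := ae_bdd_condExp_of_ae_bdd (m := 𝒢) (μ := P) (R := 1)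
      (f := fun ω => if D ω = e then (1:ℝ) else 0)
      (Filter.Eventually.of_forall fun x => by simpa [Real.norm_eq_abs] using hIbd e x)
    filter_upwards [h] with ω hω
    simpa [Real.norm_eq_abs] using hω
  -- p₁ = E[𝟙{D=1}|𝒢] a.e.
  have hq1 : p₁ =ᵐ[P] P[fun ω => if D ω = 1 then (1:ℝ) else 0|𝒢] := by
    have hcast : (fun ω => ((D ω : ℝ))) = fun ω => if D ω = 1 then (1:ℝ) else 0 := by
      funext ω; rcases hD01 ω with h | h <;> simp [h]
    refine hp₁.trans ?_
    rw [hcast]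
  -- 1 - p₁ = E[𝟙{D=0}|𝒢] a.e.
  have hq0 : (fun ω => 1 - p₁ ω) =ᵐ[P] P[fun ω => if D ω = 0 then (1:ℝ) else 0|𝒢] := by
    have he : (fun ω => if D ω = 0 then (1:ℝ) else 0)
        = (fun _ => (1:ℝ)) - (fun ω => if D ω = 1 then (1:ℝ) else 0) := by
      funext ω; rcases hD01 ω with h | h <;> simp [h]
    have h2 : P[fun ω => if D ω = 0 then (1:ℝ) else 0|𝒢]
        =ᵐ[P] (fun _ => (1:ℝ)) - P[fun ω => if D ω = 1 then (1:ℝ) else 0|𝒢] := by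
      rw [he]
      refine (condExp_sub (integrable_const (μ := P) (1:ℝ)) (hIint 1) 𝒢).trans ?_
      rw [condExp_const h𝒢le]
    filter_upwards [h2, hq1] with ω h2ω h1ω
    have : (P[fun ω => if D ω = 0 then (1:ℝ) else 0|𝒢]) ω
        = 1 - (P[fun ω => if D ω = 1 then (1:ℝ) else 0|𝒢]) ω := h2ω
    rw [this, ← h1ω]
  -- the key product identity, integrated against a bounded 𝒢-measurable weight
  have hK : ∀ (Z : Ω → ℝ), StronglyMeasurable[𝒢] Z → (∀ᵐ ω ∂P, ‖Z ω‖ ≤ 1) →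
      ∀ (r : ℕ), r = 0 ∨ r = 1 → ∀ e : ℕ,
      ∫ ω, Z ω * (Y r ω * (if D ω = e then (1:ℝ) else 0)) ∂P
        = ∫ ω, Z ω * ((P[Y r|𝒢]) ω
            * (P[fun ω => if D ω = e then (1:ℝ) else 0|𝒢]) ω) ∂P := by
    intro Z hZsm hZbd r hr e
    have hYr : Integrable (Y r) P := by rcases hr with h | h <;> rw [h] <;> assumption
    have hind : CondIndepFun 𝒢 h𝒢le (Y r) D (μ := P) := by
      rcases hr with h | h <;> rw [h] <;> assumption
    have hYrI : Integrable (fun ω => Y r ω * (if D ω = e then (1:ℝ) else 0)) P :=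
      integrable_mul_bdd hYr (hImeas e).aestronglyMeasurable ⟨1, hIbd e⟩
    have hZaesm : AEStronglyMeasurable[mΩ] Z P := (hZsm.mono h𝒢le).aestronglyMeasurable
    have hF1 := condexp_mul_indicator_of_condIndepFun h𝒢le P hYr hD' hind e
    calc ∫ ω, Z ω * (Y r ω * (if D ω = e then (1:ℝ) else 0)) ∂P
        = ∫ ω, Z ω * (P[fun ω => Y r ω * (if D ω = e then (1:ℝ) else 0)|𝒢]) ω ∂P :=
          integral_mul_condexp h𝒢le P hZsm hYrI (hYrI.bdd_mul hZaesm hZbd)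
      _ = ∫ ω, Z ω * ((P[Y r|𝒢]) ω
            * (P[fun ω => if D ω = e then (1:ℝ) else 0|𝒢]) ω) ∂P := by
          refine integral_congr_ae ?_
          filter_upwards [hF1] with ω hω
          try dsimp only at hω ⊢
          rw [hω]
  -- decomposition of Yobs
  have hYobs' : ∀ ω, Yobs ω = Y 1 ω * (if D ω = 1 then (1:ℝ) else 0)
      + Y 0 ω * (if D ω = 0 then (1:ℝ) else 0) := by
    intro ω; rcases hD01 ω with h | h <;> simp [hYobs ω, h]
  have hYobsInt : Integrable Yobs P := by
    have : Integrable (fun ω => Y 1 ω * (if D ω = 1 then (1:ℝ) else 0)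
        + Y 0 ω * (if D ω = 0 then (1:ℝ) else 0)) P :=
      (integrable_mul_bdd hY1int (hImeas 1).aestronglyMeasurable ⟨1, hIbd 1⟩).add
        (integrable_mul_bdd hY0int (hImeas 0).aestronglyMeasurable ⟨1, hIbd 0⟩)
    exact this.congr (Filter.Eventually.of_forall fun ω => (hYobs' ω).symm)
  -- p₁ bounds
  have hp₁sm : StronglyMeasurable[𝒢] p₁ := hp₁meas.stronglyMeasurable
  have hp₁aesm : AEStronglyMeasurable[mΩ] p₁ P := (hp₁meas.mono h𝒢le le_rfl).aestronglyMeasurable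
  have hp₁bd : ∀ᵐ ω ∂P, ‖p₁ ω‖ ≤ 1 := Filter.Eventually.of_forall fun ω => by
    rw [Real.norm_eq_abs, abs_le]; exact ⟨by linarith [hp₁0 ω], hp₁1 ω⟩
  have hp₁'sm : StronglyMeasurable[𝒢] (fun ω => 1 - p₁ ω) :=
    stronglyMeasurable_const.sub hp₁sm
  have hp₁'aesm : AEStronglyMeasurable[mΩ] (fun ω => 1 - p₁ ω) P :=
    aestronglyMeasurable_const.sub hp₁aesm
  have hp₁'bd : ∀ᵐ ω ∂P, ‖1 - p₁ ω‖ ≤ 1 := Filter.Eventually.of_forall fun ω => by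
    rw [Real.norm_eq_abs, abs_le]; constructor <;> [linarith [hp₁1 ω]; linarith [hp₁0 ω]]
  intro d hd
  -- integrability of the products against 𝟙{D=d}
  have hY1Id : Integrable (fun ω => Y 1 ω * (if D ω = d then (1:ℝ) else 0)) P :=
    integrable_mul_bdd hY1int (hImeas d).aestronglyMeasurable ⟨1, hIbd d⟩
  have hY0Id : Integrable (fun ω => Y 0 ω * (if D ω = d then (1:ℝ) else 0)) P :=
    integrable_mul_bdd hY0int (hImeas d).aestronglyMeasurable ⟨1, hIbd d⟩
  have hg₂Id : Integrable (fun ω => g₂ ω * (if D ω = d then (1:ℝ) else 0)) P :=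
    integrable_mul_bdd hg₂int (hImeas d).aestronglyMeasurable ⟨1, hIbd d⟩
  have hYobsId : Integrable (fun ω => Yobs ω * (if D ω = d then (1:ℝ) else 0)) P :=
    integrable_mul_bdd hYobsInt (hImeas d).aestronglyMeasurable ⟨1, hIbd d⟩
  -- PART 1
  -- left side decomposition
  have int1 : Integrable (fun ω => p₁ ω * (Y 1 ω * (if D ω = d then (1:ℝ) else 0))) P :=
    hY1Id.bdd_mul hp₁aesm hp₁bd
  have int2 : Integrable
      (fun ω => (1 - p₁ ω) * (Y 0 ω * (if D ω = d then (1:ℝ) else 0))) P :=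
    hY0Id.bdd_mul hp₁'aesm hp₁'bd
  have hL : ∫ ω, Y2 ω * (if D ω = d then (1:ℝ) else 0) ∂P
      = ∫ ω, p₁ ω * (Y 1 ω * (if D ω = d then (1:ℝ) else 0)) ∂P
        + ∫ ω, (1 - p₁ ω) * (Y 0 ω * (if D ω = d then (1:ℝ) else 0)) ∂P := by
    rw [← integral_add int1 int2]
    refine integral_congr_ae (Filter.Eventually.of_forall fun ω => ?_)
    simp only [hY2]; ring
  have e1 := hK p₁ hp₁sm hp₁bd 1 (Or.inr rfl) d
  have e2 := hK (fun ω => 1 - p₁ ω) hp₁'sm hp₁'bd 0 (Or.inl rfl) d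
  have e3 : ∫ ω, p₁ ω * ((P[Y 1|𝒢]) ω
        * (P[fun ω => if D ω = d then (1:ℝ) else 0|𝒢]) ω) ∂P
      = ∫ ω, (P[fun ω => if D ω = 1 then (1:ℝ) else 0|𝒢]) ω * ((P[Y 1|𝒢]) ω
        * (P[fun ω => if D ω = d then (1:ℝ) else 0|𝒢]) ω) ∂P := by
    refine integral_congr_ae ?_
    filter_upwards [hq1] with ω hω
    try dsimp only
    rw [hω]
  have e4 : ∫ ω, (1 - p₁ ω) * ((P[Y 0|𝒢]) ω
        * (P[fun ω => if D ω = d then (1:ℝ) else 0|𝒢]) ω) ∂P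
      = ∫ ω, (P[fun ω => if D ω = 0 then (1:ℝ) else 0|𝒢]) ω * ((P[Y 0|𝒢]) ω
        * (P[fun ω => if D ω = d then (1:ℝ) else 0|𝒢]) ω) ∂P := by
    refine integral_congr_ae ?_
    filter_upwards [hq0] with ω hω
    try dsimp only at hω ⊢
    rw [hω]
  -- right side
  have r1 : ∫ ω, g₂ ω * (if D ω = d then (1:ℝ) else 0) ∂P
      = ∫ ω, g₂ ω * (P[fun ω => if D ω = d then (1:ℝ) else 0|𝒢]) ω ∂P :=
    integral_mul_condexp h𝒢le P hg₂meas.stronglyMeasurable (hIint d) hg₂Id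
  have r2 : ∫ ω, g₂ ω * (P[fun ω => if D ω = d then (1:ℝ) else 0|𝒢]) ω ∂P
      = ∫ ω, (P[fun ω => if D ω = d then (1:ℝ) else 0|𝒢]) ω * (P[Yobs|𝒢]) ω ∂P := by
    refine integral_congr_ae ?_
    filter_upwards [hg₂] with ω hω
    try dsimp only
    rw [hω]; ring
  have hqdYobs : Integrable
      (fun ω => (P[fun ω => if D ω = d then (1:ℝ) else 0|𝒢]) ω * Yobs ω) P :=
    hYobsInt.bdd_mul integrable_condExp.aestronglyMeasurable (hqbd d)
  have r3 : ∫ ω, (P[fun ω => if D ω = d then (1:ℝ) else 0|𝒢]) ω * Yobs ω ∂P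
      = ∫ ω, (P[fun ω => if D ω = d then (1:ℝ) else 0|𝒢]) ω * (P[Yobs|𝒢]) ω ∂P :=
    integral_mul_condexp h𝒢le P stronglyMeasurable_condExp hYobsInt hqdYobs
  have r4 : ∫ ω, (P[fun ω => if D ω = d then (1:ℝ) else 0|𝒢]) ω * Yobs ω ∂P
      = ∫ ω, (P[fun ω => if D ω = d then (1:ℝ) else 0|𝒢]) ω
          * (Y 1 ω * (if D ω = 1 then (1:ℝ) else 0)) ∂P
        + ∫ ω, (P[fun ω => if D ω = d then (1:ℝ) else 0|𝒢]) ω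
          * (Y 0 ω * (if D ω = 0 then (1:ℝ) else 0)) ∂P := by
    have i1 : Integrable (fun ω => (P[fun ω => if D ω = d then (1:ℝ) else 0|𝒢]) ω
        * (Y 1 ω * (if D ω = 1 then (1:ℝ) else 0))) P :=
      (integrable_mul_bdd hY1int (hImeas 1).aestronglyMeasurable ⟨1, hIbd 1⟩).bdd_mul
        integrable_condExp.aestronglyMeasurable (hqbd d)
    have i0 : Integrable (fun ω => (P[fun ω => if D ω = d then (1:ℝ) else 0|𝒢]) ω
        * (Y 0 ω * (if D ω = 0 then (1:ℝ) else 0))) P :=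
      (integrable_mul_bdd hY0int (hImeas 0).aestronglyMeasurable ⟨1, hIbd 0⟩).bdd_mul
        integrable_condExp.aestronglyMeasurable (hqbd d)
    rw [← integral_add i1 i0]
    refine integral_congr_ae (Filter.Eventually.of_forall fun ω => ?_)
    try dsimp only
    simp only [hYobs']; ring
  have r5 := hK (P[fun ω => if D ω = d then (1:ℝ) else 0|𝒢]) stronglyMeasurable_condExp
    (hqbd d) 1 (Or.inr rfl) 1
  have r6 := hK (P[fun ω => if D ω = d then (1:ℝ) else 0|𝒢]) stronglyMeasurable_condExp
    (hqbd d) 0 (Or.inl rfl) 0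
  -- matching the two sides
  have s1 : ∫ ω, (P[fun ω => if D ω = 1 then (1:ℝ) else 0|𝒢]) ω * ((P[Y 1|𝒢]) ω
        * (P[fun ω => if D ω = d then (1:ℝ) else 0|𝒢]) ω) ∂P
      = ∫ ω, (P[fun ω => if D ω = d then (1:ℝ) else 0|𝒢]) ω * ((P[Y 1|𝒢]) ω
        * (P[fun ω => if D ω = 1 then (1:ℝ) else 0|𝒢]) ω) ∂P :=
    integral_congr_ae (Filter.Eventually.of_forall fun ω => by ring)
  have s0 : ∫ ω, (P[fun ω => if D ω = 0 then (1:ℝ) else 0|𝒢]) ω * ((P[Y 0|𝒢]) ω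
        * (P[fun ω => if D ω = d then (1:ℝ) else 0|𝒢]) ω) ∂P
      = ∫ ω, (P[fun ω => if D ω = d then (1:ℝ) else 0|𝒢]) ω * ((P[Y 0|𝒢]) ω
        * (P[fun ω => if D ω = 0 then (1:ℝ) else 0|𝒢]) ω) ∂P :=
    integral_congr_ae (Filter.Eventually.of_forall fun ω => by ring)
  have hpart1 : ∫ ω, Y2 ω * (if D ω = d then (1:ℝ) else 0) ∂P
      = ∫ ω, g₂ ω * (if D ω = d then (1:ℝ) else 0) ∂P := by
    linarith [hL, e1, e2, e3, e4, r1, r2, r3, r4, r5, r6, s1, s0]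
  refine ⟨hpart1, ?_⟩
  -- PART 2
  have hYdI : (fun ω => Y d ω * (if D ω = d then (1:ℝ) else 0))
      = fun ω => Yobs ω * (if D ω = d then (1:ℝ) else 0) := by
    funext ω
    by_cases h : D ω = d
    · rcases hd with rfl | rfl <;> simp [hYobs ω, h]
    · simp [h]
  have hnum : ∫ ω, Y d ω * (if D ω = d then (1:ℝ) else 0) ∂P
      - ∫ ω, Y2 ω * (if D ω = d then (1:ℝ) else 0) ∂P
      = ∫ ω, (Yobs ω - g₂ ω) * (if D ω = d then (1:ℝ) else 0) ∂P := by
    rw [hYdI, hpart1, ← integral_sub hYobsId hg₂Id]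
    refine integral_congr_ae (Filter.Eventually.of_forall fun ω => ?_)
    try dsimp only
    ring
  show (∫ ω, Y d ω * (if D ω = d then (1:ℝ) else 0) ∂P) / (P {ω | D ω = d}).toReal
      - (∫ ω, Y2 ω * (if D ω = d then (1:ℝ) else 0) ∂P) / (P {ω | D ω = d}).toReal
      = (∫ ω, (Yobs ω - g₂ ω) * (if D ω = d then (1:ℝ) else 0) ∂P)
        / (P {ω | D ω = d}).toReal
  rw [div_sub_div_same, hnum]
end

section
/- (Inverse probability weighting identification with the equilibrium reference, r = 2.) Assume ignorability for Y(0) and ignorability for Y(1). Then for each d ∈ {0,1}, E[Y(2)·𝟙{D = d}] = E[Y^obs·p_d], and consequently Δ_S^{2,d} = E[Y^obs·(𝟙{D = d} − p_d)] / P(D = d). In particular no division by the propensity score occurs and no common-support condition on p₁ is required. -/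
open MeasureTheory ProbabilityTheory
open scoped ENNReal NNReal

section Aux

variable {Ω : Type*} [mΩ : MeasurableSpace Ω] [StandardBorelSpace Ω]

/-- Integrable times bounded (by 1) measurable is integrable. -/
lemma aux_int_mul {P : Measure Ω} {f g : Ω → ℝ} (hf : Integrable f P)
    (hg : AEStronglyMeasurable g P) (hb : ∀ ω, ‖g ω‖ ≤ 1) :
    Integrable (fun ω => f ω * g ω) P := by
  simpa [mul_comm] using hf.bdd_mul hg (c := 1) (Filter.Eventually.of_forall hb)

/-- Conditional independence transfers along a.e. equality in the first argument. -/
lemma condIndepFun_congr_left (P : Measure Ω) [IsProbabilityMeasure P]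
    (𝒢 : MeasurableSpace Ω) (h𝒢le : 𝒢 ≤ mΩ)
    {Z Z' : Ω → ℝ} {D : Ω → ℕ}
    (h : CondIndepFun 𝒢 h𝒢le Z D (μ := P)) (hZZ' : Z =ᵐ[P] Z') :
    CondIndepFun 𝒢 h𝒢le Z' D (μ := P) := by
  letI : MeasurableSpace Ω := mΩ
  have hae : ∀ᵐ ω ∂(P.trim h𝒢le), Z =ᵐ[condExpKernel P 𝒢 ω] Z' := by
    set t := toMeasurable P {ω | Z ω ≠ Z' ω} with ht_def
    have ht : MeasurableSet t := measurableSet_toMeasurable _ _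
    have htP : P t = 0 := by
      rw [ht_def, measure_toMeasurable]
      exact hZZ'
    have h1 : (fun ω => (condExpKernel P 𝒢 ω t).toReal) =ᵐ[P] P⟦t | 𝒢⟧ :=
      condExpKernel_ae_eq_condExp h𝒢le ht
    have h2 : P⟦t | 𝒢⟧ =ᵐ[P] 0 := by
      have hind : (Set.indicator t fun _ => (1:ℝ)) =ᵐ[P] 0 := by
        have : ∀ᵐ ω ∂P, ω ∉ t := (measure_eq_zero_iff_ae_notMem (μ := P)).1 htP
        filter_upwards [this] with ω hω
        simp [Set.indicator_of_notMem hω]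
      calc P⟦t | 𝒢⟧ =ᵐ[P] P[(0 : Ω → ℝ) | 𝒢] := condExp_congr_ae hind
        _ = 0 := condExp_zero
    have h3 : ∀ᵐ ω ∂P, condExpKernel P 𝒢 ω t = 0 := by
      filter_upwards [h1.trans h2] with ω hω
      have hne : condExpKernel P 𝒢 ω t ≠ ⊤ := measure_ne_top _ _
      simpa [ENNReal.toReal_eq_zero_iff, hne] using hω
    have hmeas : Measurable[𝒢] (fun ω => condExpKernel P 𝒢 ω t) :=
      measurable_condExpKernel ht
    have h4 : ∀ᵐ ω ∂(P.trim h𝒢le), condExpKernel P 𝒢 ω t = 0 := by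
      rw [Filter.eventually_iff, mem_ae_iff]
      have hset : MeasurableSet[𝒢] {ω | ¬ condExpKernel P 𝒢 ω t = 0} :=
        hmeas (measurableSet_singleton 0) |>.compl
      rw [Set.compl_setOf]
      rw [trim_measurableSet_eq h𝒢le hset]
      simpa [ae_iff] using h3
    filter_upwards [h4] with ω hω
    have : condExpKernel P 𝒢 ω {x | Z x ≠ Z' x} = 0 :=
      measure_mono_null (subset_toMeasurable _ _) hω
    exact this
  exact Kernel.IndepFun.congr' h hae
    (Filter.Eventually.of_forall fun ω => Filter.EventuallyEq.rfl)

/-- The key IPW identity: `E[Z·D] = E[Z·p₁]` under conditional independence. -/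
lemma aux_key (P : Measure Ω) [IsProbabilityMeasure P]
    (𝒢 : MeasurableSpace Ω) (h𝒢le : 𝒢 ≤ mΩ)
    {Z : Ω → ℝ} (hZint : Integrable Z P)
    {D : Ω → ℕ} (hD : Measurable[mΩ] D) (hD01 : ∀ ω, D ω = 0 ∨ D ω = 1)
    (hind : CondIndepFun 𝒢 h𝒢le Z D (μ := P))
    {p₁ : Ω → ℝ} (hp₁meas : Measurable[𝒢] p₁)
    (hp₁ : p₁ =ᵐ[P] P[fun ω => (D ω : ℝ) | 𝒢])
    (hp₁0 : ∀ ω, 0 ≤ p₁ ω) (hp₁1 : ∀ ω, p₁ ω ≤ 1) :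
    ∫ ω, Z ω * (D ω : ℝ) ∂P = ∫ ω, Z ω * p₁ ω ∂P := by
  letI : MeasurableSpace Ω := mΩ
  -- replace Z by a measurable representative
  have hZsm := hZint.1
  set Z' := hZsm.mk Z with hZ'def
  have hZ'sm : StronglyMeasurable Z' := hZsm.stronglyMeasurable_mk
  have hZZ' : Z =ᵐ[P] Z' := hZsm.ae_eq_mk
  have hZ'meas : Measurable Z' := hZ'sm.measurable
  have hZ'int : Integrable Z' P := hZint.congr hZZ'
  have hind' : CondIndepFun 𝒢 h𝒢le Z' D (μ := P) :=
    condIndepFun_congr_left P 𝒢 h𝒢le hind hZZ'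
  have hL : ∫ ω, Z ω * (D ω : ℝ) ∂P = ∫ ω, Z' ω * (D ω : ℝ) ∂P :=
    integral_congr_ae (by filter_upwards [hZZ'] with ω hω; rw [hω])
  have hR : ∫ ω, Z ω * p₁ ω ∂P = ∫ ω, Z' ω * p₁ ω ∂P :=
    integral_congr_ae (by filter_upwards [hZZ'] with ω hω; rw [hω])
  rw [hL, hR]
  clear hL hR hZZ' hind hZint
  -- notation
  set B : Set Ω := D ⁻¹' {1} with hB_def
  have hB : MeasurableSet B := hD (measurableSet_singleton 1)
  have hDind : ∀ ω, (D ω : ℝ) = B.indicator (fun _ => (1:ℝ)) ω := by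
    intro ω
    rcases hD01 ω with h | h <;>
      simp [Set.indicator, hB_def, Set.mem_preimage, h]
  have hp₁m' : Measurable p₁ := hp₁meas.mono h𝒢le le_rfl
  have hp₁norm : ∀ ω, ‖p₁ ω‖ ≤ 1 := by
    intro ω
    rw [Real.norm_eq_abs, abs_le]
    exact ⟨by linarith [hp₁0 ω], hp₁1 ω⟩
  have hp₁int : Integrable p₁ P :=
    Integrable.mono' (integrable_const 1) hp₁m'.aestronglyMeasurable
      (Filter.Eventually.of_forall hp₁norm)
  -- the conditional probability of B is p₁
  have hBp : P⟦B | 𝒢⟧ =ᵐ[P] p₁ := by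
    have heq : (fun ω => (D ω : ℝ)) = B.indicator (fun _ => (1:ℝ)) := funext hDind
    have : P⟦B | 𝒢⟧ = P[fun ω => (D ω : ℝ) | 𝒢] := by rw [heq]
    rw [this]
    exact hp₁.symm
  -- factorization from conditional independence
  have hfact : ∀ {A : Set ℝ}, MeasurableSet A →
      P⟦Z' ⁻¹' A ∩ B | 𝒢⟧ =ᵐ[P]
        fun ω => (P⟦Z' ⁻¹' A | 𝒢⟧) ω * (P⟦B | 𝒢⟧) ω := by
    intro A hA
    exact (condIndepFun_iff_condExp_inter_preimage_eq_mul hZ'meas hD).mp hind' A {1} hA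
      (measurableSet_singleton 1)
  -- the real-valued identity for sets
  have hreal : ∀ A : Set ℝ, MeasurableSet A →
      (P (Z' ⁻¹' A ∩ B)).toReal = ∫ ω in Z' ⁻¹' A, p₁ ω ∂P := by
    intro A hA
    have hs : MeasurableSet (Z' ⁻¹' A) := hZ'meas hA
    have hgint : Integrable ((Z' ⁻¹' A).indicator fun _ => (1:ℝ)) P :=
      (integrable_const (1:ℝ)).indicator hs
    have hfgint : Integrable (p₁ * (Z' ⁻¹' A).indicator fun _ => (1:ℝ)) P := by
      have := hgint.bdd_mul hp₁m'.aestronglyMeasurable (c := 1) (Filter.Eventually.of_forall hp₁norm)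
      simpa [Pi.mul_def] using this
    have hmul : P[p₁ * ((Z' ⁻¹' A).indicator fun _ => (1:ℝ)) | 𝒢]
        =ᵐ[P] p₁ * P[(Z' ⁻¹' A).indicator (fun _ => (1:ℝ)) | 𝒢] :=
      condExp_mul_of_stronglyMeasurable_left hp₁meas.stronglyMeasurable hfgint hgint
    calc (P (Z' ⁻¹' A ∩ B)).toReal
        = ∫ ω, (Z' ⁻¹' A ∩ B).indicator (fun _ => (1:ℝ)) ω ∂P :=
          (integral_indicator_one (hs.inter hB)).symm
      _ = ∫ ω, (P⟦Z' ⁻¹' A ∩ B | 𝒢⟧) ω ∂P := (integral_condExp h𝒢le).symm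
      _ = ∫ ω, (P⟦Z' ⁻¹' A | 𝒢⟧) ω * p₁ ω ∂P := by
          refine integral_congr_ae ?_
          filter_upwards [hfact hA, hBp] with ω h1 h2
          rw [h1, h2]
      _ = ∫ ω, (p₁ * P[(Z' ⁻¹' A).indicator (fun _ => (1:ℝ)) | 𝒢]) ω ∂P := by
          refine integral_congr_ae (Filter.Eventually.of_forall fun ω => ?_)
          simp [mul_comm]
      _ = ∫ ω, (p₁ * (Z' ⁻¹' A).indicator fun _ => (1:ℝ)) ω ∂P := by
          rw [← integral_condExp (μ := P)
            (f := p₁ * (Z' ⁻¹' A).indicator fun _ => (1:ℝ)) h𝒢le]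
          exact (integral_congr_ae hmul).symm
      _ = ∫ ω in Z' ⁻¹' A, p₁ ω ∂P := by
          rw [← integral_indicator hs]
          refine integral_congr_ae (Filter.Eventually.of_forall fun ω => ?_)
          by_cases hω : ω ∈ Z' ⁻¹' A <;> simp [hω]
  -- equality of pushforward measures
  have hmapeq : (P.restrict B).map Z'
      = (P.withDensity fun ω => ENNReal.ofReal (p₁ ω)).map Z' := by
    refine Measure.ext fun A hA => ?_
    rw [Measure.map_apply hZ'meas hA, Measure.map_apply hZ'meas hA,
      Measure.restrict_apply (hZ'meas hA),
      withDensity_apply _ (hZ'meas hA)]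
    have h1 : ∫⁻ ω in Z' ⁻¹' A, ENNReal.ofReal (p₁ ω) ∂P
        = ENNReal.ofReal (∫ ω in Z' ⁻¹' A, p₁ ω ∂P) :=
      (ofReal_integral_eq_lintegral_ofReal (hp₁int.restrict)
        (Filter.Eventually.of_forall hp₁0)).symm
    rw [h1, ← hreal A hA, ENNReal.ofReal_toReal (measure_ne_top _ _)]
  -- conclude
  have hid : ∀ (μ : Measure Ω), Integrable Z' μ → True := fun _ _ => trivial
  calc ∫ ω, Z' ω * (D ω : ℝ) ∂P
      = ∫ ω, B.indicator Z' ω ∂P := by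
        refine integral_congr_ae (Filter.Eventually.of_forall fun ω => ?_)
        by_cases hω : ω ∈ B <;> simp [hDind ω, hω]
    _ = ∫ ω, Z' ω ∂(P.restrict B) := integral_indicator hB
    _ = ∫ x, x ∂((P.restrict B).map Z') :=
        (integral_map hZ'meas.aemeasurable aestronglyMeasurable_id).symm
    _ = ∫ x, x ∂((P.withDensity fun ω => ENNReal.ofReal (p₁ ω)).map Z') := by
        rw [hmapeq]
    _ = ∫ ω, Z' ω ∂(P.withDensity fun ω => ENNReal.ofReal (p₁ ω)) :=
        integral_map hZ'meas.aemeasurable aestronglyMeasurable_id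
    _ = ∫ ω, Z' ω * p₁ ω ∂P := by
        have hdens : (fun ω => ENNReal.ofReal (p₁ ω))
            = fun ω => ((Real.toNNReal (p₁ ω) : ℝ≥0) : ℝ≥0∞) := rfl
        rw [hdens, integral_withDensity_eq_integral_smul
          (f := fun ω => (p₁ ω).toNNReal)
          (measurable_real_toNNReal.comp hp₁m') Z']
        refine integral_congr_ae (Filter.Eventually.of_forall fun ω => ?_)
        simp [NNReal.smul_def, Real.coe_toNNReal _ (hp₁0 ω), mul_comm]

end Aux

/-- inverse probability weighting identification with the equilibrium reference
`r = 2`. No division by the propensity score occurs and no common support is required. -/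
theorem stmt_5
    {Ω 𝒳 : Type*} (𝒢 : MeasurableSpace Ω) [mΩ : MeasurableSpace Ω] [StandardBorelSpace Ω]
    [MeasurableSpace 𝒳]
    (P : Measure Ω) [IsProbabilityMeasure P]
    (X : Ω → 𝒳) (hX : Measurable X)
    (h𝒢 : 𝒢 = MeasurableSpace.comap X inferInstance)
    (h𝒢le : 𝒢 ≤ mΩ)
    (D : Ω → ℕ) (hD : Measurable D) (hD01 : ∀ ω, D ω = 0 ∨ D ω = 1)
    (hD1pos : 0 < P {ω | D ω = 1}) (hD1lt : P {ω | D ω = 1} < 1)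
    (Y : ℕ → Ω → ℝ) (hY0int : Integrable (Y 0) P) (hY1int : Integrable (Y 1) P)
    (Yobs : Ω → ℝ)
    (hYobs : ∀ ω, Yobs ω = (D ω : ℝ) * Y 1 ω + (1 - (D ω : ℝ)) * Y 0 ω)
    (p₁ : Ω → ℝ) (hp₁meas : Measurable[𝒢] p₁)
    (hp₁ : p₁ =ᵐ[P] P[fun ω => (D ω : ℝ) | 𝒢])
    (hp₁0 : ∀ ω, 0 ≤ p₁ ω) (hp₁1 : ∀ ω, p₁ ω ≤ 1)
    (hig0 : CondIndepFun 𝒢 h𝒢le (Y 0) D (μ := P))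
    (hig1 : CondIndepFun 𝒢 h𝒢le (Y 1) D (μ := P))
    (Y2 : Ω → ℝ) (hY2 : ∀ ω, Y2 ω = p₁ ω * Y 1 ω + (1 - p₁ ω) * Y 0 ω) :
    ∀ d : ℕ, d = 0 ∨ d = 1 →
      (∫ ω, Y2 ω * (if D ω = d then (1:ℝ) else 0) ∂P
        = ∫ ω, Yobs ω * pscore p₁ d ω ∂P)
      ∧ condMean P (Y d) D d - condMean P Y2 D d
        = (∫ ω, Yobs ω * ((if D ω = d then (1:ℝ) else 0) - pscore p₁ d ω) ∂P)
          / (P {ω | D ω = d}).toReal := by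
  letI : MeasurableSpace Ω := mΩ
  -- basic measurability and boundedness facts
  have hDm : Measurable[mΩ] D := hD
  have hDr : Measurable fun ω => (D ω : ℝ) := measurable_from_top.comp hDm
  have hDrb : ∀ ω, ‖(D ω : ℝ)‖ ≤ 1 := by
    intro ω; rcases hD01 ω with h | h <;> simp [h]
  have hDrb' : ∀ ω, ‖1 - (D ω : ℝ)‖ ≤ 1 := by
    intro ω; rcases hD01 ω with h | h <;> simp [h]
  have hp₁m' : Measurable p₁ := hp₁meas.mono h𝒢le le_rfl
  have hp₁norm : ∀ ω, ‖p₁ ω‖ ≤ 1 := by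
    intro ω; rw [Real.norm_eq_abs, abs_le]; exact ⟨by linarith [hp₁0 ω], hp₁1 ω⟩
  have hp₁norm' : ∀ ω, ‖1 - p₁ ω‖ ≤ 1 := by
    intro ω; rw [Real.norm_eq_abs, abs_le]
    exact ⟨by linarith [hp₁1 ω], by linarith [hp₁0 ω]⟩
  -- key identities
  have hkey0 : ∫ ω, Y 0 ω * (D ω : ℝ) ∂P = ∫ ω, Y 0 ω * p₁ ω ∂P :=
    aux_key P 𝒢 h𝒢le hY0int hDm hD01 hig0 hp₁meas hp₁ hp₁0 hp₁1
  have hkey1 : ∫ ω, Y 1 ω * (D ω : ℝ) ∂P = ∫ ω, Y 1 ω * p₁ ω ∂P :=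
    aux_key P 𝒢 h𝒢le hY1int hDm hD01 hig1 hp₁meas hp₁ hp₁0 hp₁1
  -- integrability facts
  have hY2int : Integrable Y2 P := by
    have h1 : Integrable (fun ω => Y 1 ω * p₁ ω) P :=
      aux_int_mul hY1int hp₁m'.aestronglyMeasurable hp₁norm
    have h0 : Integrable (fun ω => Y 0 ω * (1 - p₁ ω)) P :=
      aux_int_mul hY0int (measurable_const.sub hp₁m').aestronglyMeasurable hp₁norm'
    have := h1.add h0
    refine this.congr (Filter.Eventually.of_forall fun ω => ?_)
    simp only [Pi.add_apply]; rw [hY2 ω]; ring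
  have hYobsint : Integrable Yobs P := by
    have h1 : Integrable (fun ω => Y 1 ω * (D ω : ℝ)) P :=
      aux_int_mul hY1int hDr.aestronglyMeasurable hDrb
    have h0 : Integrable (fun ω => Y 0 ω * (1 - (D ω : ℝ))) P :=
      aux_int_mul hY0int (measurable_const.sub hDr).aestronglyMeasurable hDrb'
    have := h1.add h0
    refine this.congr (Filter.Eventually.of_forall fun ω => ?_)
    simp only [Pi.add_apply]; rw [hYobs ω]; ring
  have hY0Dint : Integrable (fun ω => Y 0 ω * (D ω : ℝ)) P :=
    aux_int_mul hY0int hDr.aestronglyMeasurable hDrb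
  have hY1Dint : Integrable (fun ω => Y 1 ω * (D ω : ℝ)) P :=
    aux_int_mul hY1int hDr.aestronglyMeasurable hDrb
  have hY0pint : Integrable (fun ω => Y 0 ω * p₁ ω) P :=
    aux_int_mul hY0int hp₁m'.aestronglyMeasurable hp₁norm
  have hY1pint : Integrable (fun ω => Y 1 ω * p₁ ω) P :=
    aux_int_mul hY1int hp₁m'.aestronglyMeasurable hp₁norm
  -- the indicator function for group d
  intro d hd
  have hindm : Measurable fun ω => (if D ω = d then (1:ℝ) else 0) := by
    have : MeasurableSet {ω | D ω = d} := hDm (measurableSet_singleton d)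
    exact Measurable.ite this measurable_const measurable_const
  have hindb : ∀ ω, ‖(if D ω = d then (1:ℝ) else 0)‖ ≤ 1 := by
    intro ω; by_cases h : D ω = d <;> simp [h]
  have hpsm : Measurable (pscore p₁ d) := by
    unfold pscore
    by_cases h : d = 1 <;> simp [h]
    · exact hp₁m'
    · exact measurable_const.sub hp₁m'
  have hpsb : ∀ ω, ‖pscore p₁ d ω‖ ≤ 1 := by
    intro ω; unfold pscore
    by_cases h : d = 1 <;> simp only [h, if_true, if_false]
    · exact hp₁norm ω
    · exact hp₁norm' ω
  have hY2indint : Integrable (fun ω => Y2 ω * (if D ω = d then (1:ℝ) else 0)) P :=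
    aux_int_mul hY2int hindm.aestronglyMeasurable hindb
  have hYobspsint : Integrable (fun ω => Yobs ω * pscore p₁ d ω) P :=
    aux_int_mul hYobsint hpsm.aestronglyMeasurable hpsb
  have hYobsindint : Integrable (fun ω => Yobs ω * (if D ω = d then (1:ℝ) else 0)) P :=
    aux_int_mul hYobsint hindm.aestronglyMeasurable hindb
  -- Part 1
  have part1 : ∫ ω, Y2 ω * (if D ω = d then (1:ℝ) else 0) ∂P
      = ∫ ω, Yobs ω * pscore p₁ d ω ∂P := by
    rw [← sub_eq_zero, ← integral_sub hY2indint hYobspsint]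
    rcases hd with hd | hd
    · -- d = 0 : difference is Y1·p₁ - Y1·D
      subst hd
      have hpt : ∀ ω, Y2 ω * (if D ω = 0 then (1:ℝ) else 0) - Yobs ω * pscore p₁ 0 ω
          = Y 1 ω * p₁ ω - Y 1 ω * (D ω : ℝ) := by
        intro ω
        have hps : pscore p₁ 0 ω = 1 - p₁ ω := by simp [pscore]
        have hind : (if D ω = 0 then (1:ℝ) else 0) = 1 - (D ω : ℝ) := by
          rcases hD01 ω with h | h <;> simp [h]
        rw [hps, hind, hY2 ω, hYobs ω]; ring
      rw [integral_congr_ae (Filter.Eventually.of_forall hpt),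
        integral_sub hY1pint hY1Dint, hkey1, sub_self]
    · -- d = 1 : difference is Y0·D - Y0·p₁
      subst hd
      have hpt : ∀ ω, Y2 ω * (if D ω = 1 then (1:ℝ) else 0) - Yobs ω * pscore p₁ 1 ω
          = Y 0 ω * (D ω : ℝ) - Y 0 ω * p₁ ω := by
        intro ω
        have hps : pscore p₁ 1 ω = p₁ ω := by simp [pscore]
        have hind : (if D ω = 1 then (1:ℝ) else 0) = (D ω : ℝ) := by
          rcases hD01 ω with h | h <;> simp [h]
        rw [hps, hind, hY2 ω, hYobs ω]; ring
      rw [integral_congr_ae (Filter.Eventually.of_forall hpt),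
        integral_sub hY0Dint hY0pint, hkey0, sub_self]
  refine ⟨part1, ?_⟩
  -- Part 2
  have hobs : ∀ ω, Y d ω * (if D ω = d then (1:ℝ) else 0)
      = Yobs ω * (if D ω = d then (1:ℝ) else 0) := by
    intro ω
    by_cases h : D ω = d
    · rcases hd with hd | hd <;> subst hd <;> simp [h, hYobs ω]
    · simp [h]
  unfold condMean
  rw [integral_congr_ae (Filter.Eventually.of_forall hobs), part1, div_sub_div_same,
    ← integral_sub hYobsindint hYobspsint]
  congr 1
  refine integral_congr_ae (Filter.Eventually.of_forall fun ω => ?_)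
  ring
end

section
/- (Double robustness of the standard-reference AIPW formula against outcome misspecification.) Let r ∈ {0,1} and d = 1 − r. Assume ignorability for Y(r) and p_r ≥ ε almost surely for some ε > 0. Then for EVERY integrable 𝒢-measurable function g : Ω → ℝ, E[(Y^obs − g)·𝟙{D = r}·p_d / p_r + 𝟙{D = d}·g] = E[Y(r)·𝟙{D = d}]; that is, the AIPW counterfactual formula recovers E[Y(r) | D = d] even when the outcome regression g is arbitrary, provided the propensity score is the true one. -/
open MeasureTheory ProbabilityTheory

/-- double robustness of the standard-reference AIPW formula against outcome
misspecification: for EVERY integrable `𝒢`-measurable `g`, the AIPW counterfactual formula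
recovers `E[Y(r)·𝟙{D = d}]`, provided the propensity score is the true one. -/
theorem stmt_7
    {Ω 𝒳 : Type*} (𝒢 : MeasurableSpace Ω) [mΩ : MeasurableSpace Ω] [StandardBorelSpace Ω]
    [MeasurableSpace 𝒳]
    (P : Measure Ω) [IsProbabilityMeasure P]
    (X : Ω → 𝒳) (hX : Measurable X)
    (h𝒢 : 𝒢 = MeasurableSpace.comap X inferInstance)
    (h𝒢le : 𝒢 ≤ mΩ)
    (D : Ω → ℕ) (hD : Measurable D) (hD01 : ∀ ω, D ω = 0 ∨ D ω = 1)
    (hD1pos : 0 < P {ω | D ω = 1}) (hD1lt : P {ω | D ω = 1} < 1)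
    (Y : ℕ → Ω → ℝ) (hY0int : Integrable (Y 0) P) (hY1int : Integrable (Y 1) P)
    (Yobs : Ω → ℝ)
    (hYobs : ∀ ω, Yobs ω = (D ω : ℝ) * Y 1 ω + (1 - (D ω : ℝ)) * Y 0 ω)
    (p₁ : Ω → ℝ) (hp₁meas : Measurable[𝒢] p₁)
    (hp₁ : p₁ =ᵐ[P] P[fun ω => (D ω : ℝ) | 𝒢])
    (hp₁0 : ∀ ω, 0 ≤ p₁ ω) (hp₁1 : ∀ ω, p₁ ω ≤ 1)
    (r d : ℕ) (hrd : (r = 0 ∧ d = 1) ∨ (r = 1 ∧ d = 0))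
    (higr : CondIndepFun 𝒢 h𝒢le (Y r) D (μ := P))
    (ε : ℝ) (hε : 0 < ε) (hcs : ∀ᵐ ω ∂P, ε ≤ pscore p₁ r ω) :
    ∀ g : Ω → ℝ, Measurable[𝒢] g → Integrable g P →
      ∫ ω, (Yobs ω - g ω) * (if D ω = r then (1:ℝ) else 0)
            * (pscore p₁ d ω / pscore p₁ r ω)
          + (if D ω = d then (1:ℝ) else 0) * g ω ∂P
        = ∫ ω, Y r ω * (if D ω = d then (1:ℝ) else 0) ∂P := by
  intro g hgmeas hgint
  -- basic facts about r, d
  have hr01 : r = 0 ∨ r = 1 := by rcases hrd with ⟨h1, _⟩ | ⟨h1, _⟩ <;> simp [h1]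
  have hd01 : d = 0 ∨ d = 1 := by rcases hrd with ⟨_, h2⟩ | ⟨_, h2⟩ <;> simp [h2]
  have hYr : Integrable (Y r) P := by
    rcases hr01 with h | h <;> simp [h, hY0int, hY1int]
  -- measurable version of Y r
  set f' : Ω → ℝ := hYr.1.mk (Y r) with hf'def
  have hf'sm : StronglyMeasurable[mΩ] f' := hYr.1.stronglyMeasurable_mk
  have hff' : Y r =ᵐ[P] f' := hYr.1.ae_eq_mk
  have hf'meas : Measurable[mΩ] f' := hf'sm.measurable
  have hf'int : Integrable f' P := hYr.congr hff'
  -- the big sigma-algebra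
  set m₂ : MeasurableSpace Ω := 𝒢 ⊔ MeasurableSpace.comap f' inferInstance with hm₂def
  letI : MeasurableSpace Ω := mΩ
  have hm₂ : m₂ ≤ mΩ := by
    refine sup_le h𝒢le ?_
    rintro s ⟨u, hu, rfl⟩
    exact hf'meas hu
  have hf'm₂ : Measurable[m₂] f' := by
    have : Measurable[MeasurableSpace.comap f' inferInstance] f' :=
      Measurable.of_comap_le le_rfl
    exact this.mono le_sup_right le_rfl
  have hgm₂ : Measurable[m₂] g := hgmeas.mono le_sup_left le_rfl
  -- the set B = {D = 1} and its indicator χ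
  set B : Set Ω := D ⁻¹' {1} with hBdef
  have hBmeas : MeasurableSet[mΩ] B := hD (measurableSet_singleton 1)
  set χ : Ω → ℝ := B.indicator (fun _ => (1:ℝ)) with hχdef
  have hχint : Integrable χ P :=
    (integrable_const (1:ℝ)).indicator hBmeas
  have hχval : ∀ ω, χ ω = if D ω = 1 then (1:ℝ) else 0 := by
    intro ω
    by_cases h : D ω = 1 <;> simp [hχdef, Set.indicator_apply, hBdef, h]
  have hχD : ∀ ω, χ ω = (D ω : ℝ) := by
    intro ω
    rcases hD01 ω with h | h <;> simp [hχval, h]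
  -- p₁ is a version of the conditional probability of B given 𝒢
  have hp₁B : (P⟦B | 𝒢⟧) =ᵐ[P] p₁ := by
    have h1 : χ = fun ω => (D ω : ℝ) := funext hχD
    have h2 : (P⟦B | 𝒢⟧) = P[fun ω => (D ω : ℝ) | 𝒢] := by
      rw [← h1]
    rw [h2]
    exact hp₁.symm
  -- the null set where Y r and f' differ
  set N : Set Ω := toMeasurable P {ω | Y r ω ≠ f' ω} with hNdef
  have hNmeas : MeasurableSet[mΩ] N := measurableSet_toMeasurable P _
  have hNnull : P N = 0 := by
    rw [measure_toMeasurable]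
    exact ae_iff.mp hff'
  have hNsub : {ω | Y r ω ≠ f' ω} ⊆ N := subset_toMeasurable P _
  -- the conditional-expectation kernel gives no mass to N, a.e.
  have hκN : ∀ᵐ ω ∂P, condExpKernel P 𝒢 ω N = 0 := by
    have h1 := condExpKernel_ae_eq_condExp (μ := P) h𝒢le hNmeas
    have h2 : (P⟦N | 𝒢⟧) =ᵐ[P] 0 := by
      have h3 : N.indicator (fun _ => (1:ℝ)) =ᵐ[P] 0 := by
        filter_upwards [measure_eq_zero_iff_ae_notMem.mp hNnull] with ω hω
        simp [Set.indicator_of_notMem hω]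
      calc (P⟦N | 𝒢⟧) =ᵐ[P] P[(0 : Ω → ℝ) | 𝒢] := condExp_congr_ae h3
        _ = 0 := condExp_zero
    filter_upwards [h1, h2] with ω hω1 hω2
    have h4 : (condExpKernel P 𝒢 ω N).toReal = 0 := by
      rw [← measureReal_def, hω1, hω2]
      rfl
    exact ((ENNReal.toReal_eq_zero_iff _).mp h4).resolve_right (measure_ne_top _ _)
  -- swapping sets that differ inside N
  have hswap : ∀ (A A' : Set Ω), (∀ x, x ∈ A → x ∉ A' → x ∈ N) →
      (∀ x, x ∈ A' → x ∉ A → x ∈ N) → ∀ ω : Ω, condExpKernel P 𝒢 ω N = 0 →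
      condExpKernel P 𝒢 ω A = condExpKernel P 𝒢 ω A' := by
    intro A A' h1 h2 ω hω
    have key : ∀ S S' : Set Ω, (∀ x, x ∈ S → x ∉ S' → x ∈ N) →
        condExpKernel P 𝒢 ω S ≤ condExpKernel P 𝒢 ω S' := by
      intro S S' h
      calc condExpKernel P 𝒢 ω S ≤ condExpKernel P 𝒢 ω (S' ∪ N) := by
            refine measure_mono fun x hx => ?_
            by_cases hx' : x ∈ S'
            · exact Or.inl hx'
            · exact Or.inr (h x hx hx')
        _ ≤ condExpKernel P 𝒢 ω S' + condExpKernel P 𝒢 ω N := measure_union_le _ _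
        _ = condExpKernel P 𝒢 ω S' := by rw [hω, add_zero]
    exact le_antisymm (key _ _ h1) (key _ _ h2)
  -- conditional independence, transported to f'
  have hCI : ∀ u : Set ℝ, MeasurableSet u →
      (P⟦(f' ⁻¹' u) ∩ B | 𝒢⟧) =ᵐ[P]
        fun ω => (P⟦f' ⁻¹' u | 𝒢⟧) ω * (P⟦B | 𝒢⟧) ω := by
    intro u hu
    have htmeas : MeasurableSet[mΩ] (f' ⁻¹' u) := hf'meas hu
    have h0 : ∀ᵐ ω ∂(P.trim h𝒢le),
        condExpKernel P 𝒢 ω ((Y r ⁻¹' u) ∩ (D ⁻¹' {1}))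
          = condExpKernel P 𝒢 ω (Y r ⁻¹' u) * condExpKernel P 𝒢 ω (D ⁻¹' {1}) :=
      higr _ _ ⟨u, hu, rfl⟩ ⟨{1}, measurableSet_singleton 1, rfl⟩
    have h0' := ae_of_ae_trim h𝒢le h0
    have hmem : ∀ x, x ∈ f' ⁻¹' u → x ∉ Y r ⁻¹' u → x ∈ N := fun x hx hx' =>
      hNsub (fun h : Y r x = f' x => hx' (by rw [Set.mem_preimage, h]; exact hx))
    have hmem' : ∀ x, x ∈ Y r ⁻¹' u → x ∉ f' ⁻¹' u → x ∈ N := fun x hx hx' =>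
      hNsub (fun h : Y r x = f' x => hx' (by rw [Set.mem_preimage, ← h]; exact hx))
    have key : ∀ᵐ ω ∂P, condExpKernel P 𝒢 ω ((f' ⁻¹' u) ∩ B)
        = condExpKernel P 𝒢 ω (f' ⁻¹' u) * condExpKernel P 𝒢 ω B := by
      filter_upwards [h0', hκN] with ω hω hN0
      have e1 : condExpKernel P 𝒢 ω ((f' ⁻¹' u) ∩ B)
          = condExpKernel P 𝒢 ω ((Y r ⁻¹' u) ∩ B) :=
        hswap _ _
          (fun x hx hx' => hmem x hx.1 (fun h => hx' (Set.mem_inter h hx.2)))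
          (fun x hx hx' => hmem' x hx.1 (fun h => hx' (Set.mem_inter h hx.2))) ω hN0
      have e2 : condExpKernel P 𝒢 ω (f' ⁻¹' u) = condExpKernel P 𝒢 ω (Y r ⁻¹' u) :=
        hswap _ _ hmem hmem' ω hN0
      rw [e1, e2]
      exact hω
    have c1 := condExpKernel_ae_eq_condExp (μ := P) h𝒢le (htmeas.inter hBmeas)
    have c2 := condExpKernel_ae_eq_condExp (μ := P) h𝒢le htmeas
    have c3 := condExpKernel_ae_eq_condExp (μ := P) h𝒢le hBmeas
    filter_upwards [key, c1, c2, c3] with ω hk h1 h2 h3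
    rw [← h1, ← h2, ← h3]; simp only [measureReal_def]; rw [hk, ENNReal.toReal_mul]
  -- integrability of p₁ and basic bounds
  have hp₁mΩ : Measurable[mΩ] p₁ := hp₁meas.mono h𝒢le le_rfl
  have hp₁int : Integrable p₁ P := by
    refine Integrable.mono' (integrable_const (1:ℝ)) hp₁mΩ.aestronglyMeasurable ?_
    exact ae_of_all _ fun ω => by
      rw [Real.norm_eq_abs, abs_of_nonneg (hp₁0 ω)]; exact hp₁1 ω
  have htot : ∫ ω, p₁ ω ∂P = ∫ ω, χ ω ∂P := by
    rw [integral_congr_ae hp₁B.symm]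
    exact integral_condExp h𝒢le
  -- the key set-integral identity on all of m₂
  have hsetint : ∀ s : Set Ω, MeasurableSet[m₂] s →
      ∫ x in s, p₁ x ∂P = ∫ x in s, χ x ∂P := by
    set K : Set (Set Ω) := {A : Set Ω | ∃ s : Set Ω, MeasurableSet[𝒢] s ∧
      ∃ u : Set ℝ, MeasurableSet u ∧ A = s ∩ f' ⁻¹' u} with hKdef
    have h_eq : m₂ = MeasurableSpace.generateFrom K := by
      apply le_antisymm
      · refine sup_le ?_ ?_
        · intro s hs
          exact MeasurableSpace.measurableSet_generateFrom
            ⟨s, hs, Set.univ, MeasurableSet.univ, by simp⟩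
        · rintro t ⟨u, hu, rfl⟩
          exact MeasurableSpace.measurableSet_generateFrom
            ⟨Set.univ, MeasurableSet.univ, u, hu, by simp⟩
      · refine MeasurableSpace.generateFrom_le ?_
        rintro A ⟨s, hs, u, hu, rfl⟩
        have h1 : MeasurableSet[m₂] s := (le_sup_left : 𝒢 ≤ m₂) _ hs
        have h2 : MeasurableSet[m₂] (f' ⁻¹' u) :=
          (le_sup_right : MeasurableSpace.comap f' inferInstance ≤ m₂) _ ⟨u, hu, rfl⟩
        exact h1.inter h2
    have h_pi : IsPiSystem K := by
      rintro A ⟨s, hs, u, hu, rfl⟩ A' ⟨s', hs', u', hu', rfl⟩ -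
      refine ⟨s ∩ s', hs.inter hs', u ∩ u', hu.inter hu', ?_⟩
      ext x
      simp only [Set.mem_inter_iff, Set.mem_preimage]
      tauto
    have hbasic : ∀ A ∈ K, ∫ x in A, p₁ x ∂P = ∫ x in A, χ x ∂P := by
      rintro A ⟨s, hs, u, hu, rfl⟩
      have hsΩ : MeasurableSet[mΩ] s := h𝒢le _ hs
      have htΩ : MeasurableSet[mΩ] (f' ⁻¹' u) := hf'meas hu
      set t : Set Ω := f' ⁻¹' u with htdef
      set ι : Ω → ℝ := t.indicator (fun _ => (1:ℝ)) with hιdef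
      have hιint : Integrable ι P := (integrable_const (1:ℝ)).indicator htΩ
      have hp₁ι : Integrable (p₁ * ι) P := by
        refine hιint.bdd_mul hp₁mΩ.aestronglyMeasurable (c := 1) (ae_of_all _ fun ω => ?_)
        rw [Real.norm_eq_abs, abs_of_nonneg (hp₁0 ω)]; exact hp₁1 ω
      have hpull := condExp_mul_of_stronglyMeasurable_left (μ := P)
        hp₁meas.stronglyMeasurable hp₁ι hιint
      -- LHS
      have l1 : ∫ x in s ∩ t, p₁ x ∂P = ∫ x in s, (p₁ * ι) x ∂P := by
        rw [← setIntegral_indicator htΩ]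
        refine setIntegral_congr_fun hsΩ fun x _ => ?_
        by_cases h : x ∈ t <;>
          simp [hιdef, Set.indicator_of_mem, Set.indicator_of_notMem, h]
      have l2 : ∫ x in s, (p₁ * ι) x ∂P = ∫ x in s, (p₁ * P[ι | 𝒢]) x ∂P := by
        rw [← setIntegral_condExp h𝒢le hp₁ι hs]
        exact setIntegral_congr_ae hsΩ (hpull.mono fun x hx _ => hx)
      -- RHS
      have hint2 : Integrable ((t ∩ B).indicator (fun _ => (1:ℝ))) P :=
        (integrable_const (1:ℝ)).indicator (htΩ.inter hBmeas)
      have r1 : ∫ x in s ∩ t, χ x ∂P = ∫ x in s, ((t ∩ B).indicator (fun _ => (1:ℝ))) x ∂P := by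
        rw [← setIntegral_indicator htΩ]
        refine setIntegral_congr_fun hsΩ fun x _ => ?_
        by_cases h : x ∈ t <;> by_cases h' : x ∈ B <;>
          simp [hχdef, Set.indicator_apply, h, h', Set.mem_inter_iff]
      have r2 : ∫ x in s, ((t ∩ B).indicator (fun _ => (1:ℝ))) x ∂P
          = ∫ x in s, (P⟦t ∩ B | 𝒢⟧) x ∂P :=
        (setIntegral_condExp h𝒢le hint2 hs).symm
      have r3 : ∫ x in s, (P⟦t ∩ B | 𝒢⟧) x ∂P = ∫ x in s, (p₁ * P[ι | 𝒢]) x ∂P := by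
        refine setIntegral_congr_ae hsΩ ?_
        filter_upwards [hCI u hu, hp₁B] with x h1 h2 _
        rw [h1, h2, Pi.mul_apply, mul_comm]
      rw [l1, l2, r1, r2, r3]
    intro s hs
    refine @MeasurableSpace.induction_on_inter Ω m₂
      (fun A _ => ∫ x in A, p₁ x ∂P = ∫ x in A, χ x ∂P) K h_eq h_pi ?_ hbasic ?_ ?_ s hs
    · simp
    · intro A hA hCA
      have hAΩ : MeasurableSet[mΩ] A := hm₂ _ hA
      have e1 := integral_add_compl hAΩ hp₁int
      have e2 := integral_add_compl hAΩ hχint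
      have : ∫ x in A, p₁ x ∂P + ∫ x in Aᶜ, p₁ x ∂P
          = ∫ x in A, χ x ∂P + ∫ x in Aᶜ, χ x ∂P := by rw [e1, e2, htot]
      linarith [this, hCA]
    · intro F hdisj hFmeas hC
      have hFΩ : ∀ i, MeasurableSet[mΩ] (F i) := fun i => hm₂ _ (hFmeas i)
      rw [integral_iUnion hFΩ hdisj hp₁int.integrableOn,
        integral_iUnion hFΩ hdisj hχint.integrableOn]
      exact tsum_congr hC
  haveI hSF : SigmaFinite (P.trim hm₂) := by
    have : IsFiniteMeasure (P.trim hm₂) := isFiniteMeasure_trim hm₂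
    infer_instance
  have hstar : p₁ =ᵐ[P] P[χ | m₂] := by
    refine ae_eq_condExp_of_forall_setIntegral_eq hm₂ hχint
      (fun s _ _ => hp₁int.integrableOn) (fun s hs _ => hsetint s hs) ?_
    exact StronglyMeasurable.aestronglyMeasurable
      ((hp₁meas.mono (le_sup_left : 𝒢 ≤ m₂) le_rfl).stronglyMeasurable)
  -- bounded-multiplier integrability helper
  have hbd : ∀ (φ c : Ω → ℝ) (M : ℝ), Integrable φ P → AEStronglyMeasurable c P →
      (∀ᵐ ω ∂P, ‖c ω‖ ≤ M) → Integrable (fun ω => φ ω * c ω) P := by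
    intro φ c M hφ hc hM
    refine Integrable.mono' (hφ.norm.const_mul M) (hφ.1.mul hc) ?_
    filter_upwards [hM] with ω hω
    rw [norm_mul]
    calc ‖φ ω‖ * ‖c ω‖ ≤ ‖φ ω‖ * M := mul_le_mul_of_nonneg_left hω (norm_nonneg _)
      _ = M * ‖φ ω‖ := mul_comm _ _
  have hχb : ∀ᵐ ω ∂P, ‖χ ω‖ ≤ 1 := ae_of_all _ fun ω => by
    rw [hχval ω]; split_ifs <;> simp
  have hχsm : AEStronglyMeasurable χ P :=
    ((measurable_const (a := (1:ℝ))).indicator hBmeas).aestronglyMeasurable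
  have hp₁b : ∀ᵐ ω ∂P, ‖p₁ ω‖ ≤ 1 := ae_of_all _ fun ω => by
    rw [Real.norm_eq_abs, abs_of_nonneg (hp₁0 ω)]; exact hp₁1 ω
  -- KEY identity
  have hKEY : ∀ φ : Ω → ℝ, Measurable[m₂] φ → Integrable φ P →
      ∫ ω, φ ω * χ ω ∂P = ∫ ω, φ ω * p₁ ω ∂P := by
    intro φ hφm hφi
    have hφχ : Integrable (fun ω => φ ω * χ ω) P := hbd φ χ 1 hφi hχsm hχb
    have hpull := condExp_mul_of_stronglyMeasurable_left (μ := P) (m := m₂)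
      hφm.stronglyMeasurable hφχ hχint
    calc ∫ ω, φ ω * χ ω ∂P = ∫ ω, (P[(fun ω => φ ω * χ ω) | m₂]) ω ∂P :=
          (integral_condExp hm₂).symm
      _ = ∫ ω, φ ω * (P[χ | m₂]) ω ∂P := integral_congr_ae hpull
      _ = ∫ ω, φ ω * p₁ ω ∂P := by
          refine integral_congr_ae ?_
          filter_upwards [hstar] with ω h
          rw [← h]
  -- bounds and measurability for pscore
  have hqmeas : ∀ j : ℕ, Measurable[𝒢] (pscore p₁ j) := by
    intro j
    unfold pscore
    by_cases h : j = 1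
    · simp only [if_pos h]; exact hp₁meas
    · simp only [if_neg h]; exact measurable_const.sub hp₁meas
  have hqnn : ∀ (j : ℕ) ω, 0 ≤ pscore p₁ j ω := by
    intro j ω; unfold pscore; split_ifs
    · exact hp₁0 ω
    · linarith [hp₁1 ω]
  have hqle1 : ∀ (j : ℕ) ω, pscore p₁ j ω ≤ 1 := by
    intro j ω; unfold pscore; split_ifs
    · exact hp₁1 ω
    · linarith [hp₁0 ω]
  have hqb : ∀ j : ℕ, ∀ᵐ ω ∂P, ‖pscore p₁ j ω‖ ≤ 1 := fun j => ae_of_all _ fun ω => by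
    rw [Real.norm_eq_abs, abs_of_nonneg (hqnn j ω)]; exact hqle1 j ω
  have hqsm : ∀ j : ℕ, AEStronglyMeasurable (pscore p₁ j) P := fun j =>
    ((hqmeas j).mono h𝒢le le_rfl).aestronglyMeasurable
  -- the indicator version of KEY
  have hKEYj : ∀ j : ℕ, (j = 0 ∨ j = 1) → ∀ φ : Ω → ℝ, Measurable[m₂] φ → Integrable φ P →
      ∫ ω, φ ω * (if D ω = j then (1:ℝ) else 0) ∂P = ∫ ω, φ ω * pscore p₁ j ω ∂P := by
    intro j hj φ hφm hφi
    have hφχ : Integrable (fun ω => φ ω * χ ω) P := hbd φ χ 1 hφi hχsm hχb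
    have hφp : Integrable (fun ω => φ ω * p₁ ω) P :=
      hbd φ p₁ 1 hφi hp₁mΩ.aestronglyMeasurable hp₁b
    rcases hj with h | h
    · subst h
      have e1 : (fun ω => φ ω * (if D ω = 0 then (1:ℝ) else 0))
          = fun ω => φ ω - φ ω * χ ω := by
        funext ω
        rcases hD01 ω with h' | h' <;> simp [h', hχval ω]
      have e2 : (fun ω => φ ω * pscore p₁ 0 ω) = fun ω => φ ω - φ ω * p₁ ω := by
        funext ω; simp [pscore]; ring
      calc ∫ ω, φ ω * (if D ω = 0 then (1:ℝ) else 0) ∂P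
          = ∫ ω, (φ ω - φ ω * χ ω) ∂P := by rw [e1]
        _ = ∫ ω, φ ω ∂P - ∫ ω, φ ω * χ ω ∂P := integral_sub hφi hφχ
        _ = ∫ ω, φ ω ∂P - ∫ ω, φ ω * p₁ ω ∂P := by rw [hKEY φ hφm hφi]
        _ = ∫ ω, (φ ω - φ ω * p₁ ω) ∂P := (integral_sub hφi hφp).symm
        _ = ∫ ω, φ ω * pscore p₁ 0 ω ∂P := by rw [e2]
    · subst h
      have e1 : (fun ω => φ ω * (if D ω = 1 then (1:ℝ) else 0)) = fun ω => φ ω * χ ω := by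
        funext ω; rw [hχval ω]
      have e2 : (fun ω => φ ω * pscore p₁ 1 ω) = fun ω => φ ω * p₁ ω := by
        funext ω; simp [pscore]
      calc ∫ ω, φ ω * (if D ω = 1 then (1:ℝ) else 0) ∂P
          = ∫ ω, φ ω * χ ω ∂P := by rw [e1]
        _ = ∫ ω, φ ω * p₁ ω ∂P := hKEY φ hφm hφi
        _ = ∫ ω, φ ω * pscore p₁ 1 ω ∂P := by rw [e2]
  -- final computation
  have hrne : r ≠ d := by rcases hrd with ⟨h1, h2⟩ | ⟨h1, h2⟩ <;> omega
  set w : Ω → ℝ := fun ω => pscore p₁ d ω / pscore p₁ r ω with hwdef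
  have hw𝒢 : Measurable[𝒢] w := (hqmeas d).div (hqmeas r)
  have hwm₂ : Measurable[m₂] w := hw𝒢.mono (le_sup_left : 𝒢 ≤ m₂) le_rfl
  have hwΩ : Measurable[mΩ] w := hw𝒢.mono h𝒢le le_rfl
  have hwbd : ∀ᵐ ω ∂P, ‖w ω‖ ≤ ε⁻¹ := by
    filter_upwards [hcs] with ω hω
    rw [Real.norm_eq_abs]
    simp only [hwdef]
    rw [abs_div, abs_of_nonneg (hqnn d ω), abs_of_nonneg (hqnn r ω)]
    calc pscore p₁ d ω / pscore p₁ r ω ≤ 1 / ε :=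
          div_le_div₀ zero_le_one (hqle1 d ω) hε hω
      _ = ε⁻¹ := one_div ε
  set φA : Ω → ℝ := fun ω => (f' ω - g ω) * w ω with hφAdef
  have hφAm : Measurable[m₂] φA := (hf'm₂.sub hgm₂).mul hwm₂
  have hφAi : Integrable φA P :=
    hbd (fun ω => f' ω - g ω) w ε⁻¹ (hf'int.sub hgint) hwΩ.aestronglyMeasurable hwbd
  have heRb : ∀ j : ℕ, ∀ᵐ ω ∂P, ‖(if D ω = j then (1:ℝ) else 0)‖ ≤ 1 := fun j =>
    ae_of_all _ fun ω => by split_ifs <;> simp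
  have heRsm : ∀ j : ℕ, AEStronglyMeasurable (fun ω => if D ω = j then (1:ℝ) else 0) P :=
    fun j =>
    ((Measurable.ite (hD (measurableSet_singleton j)) measurable_const
      measurable_const)).aestronglyMeasurable
  have hAint : Integrable (fun ω => φA ω * (if D ω = r then (1:ℝ) else 0)) P :=
    hbd φA _ 1 hφAi (heRsm r) (heRb r)
  have hBint : Integrable (fun ω => g ω * (if D ω = d then (1:ℝ) else 0)) P :=
    hbd g _ 1 hgint (heRsm d) (heRb d)
  have hgqi : Integrable (fun ω => g ω * pscore p₁ d ω) P :=
    hbd g _ 1 hgint (hqsm d) (hqb d)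
  have hfqi : Integrable (fun ω => f' ω * pscore p₁ d ω) P :=
    hbd f' _ 1 hf'int (hqsm d) (hqb d)
  have hLHS : ∫ ω, (Yobs ω - g ω) * (if D ω = r then (1:ℝ) else 0)
        * (pscore p₁ d ω / pscore p₁ r ω)
      + (if D ω = d then (1:ℝ) else 0) * g ω ∂P
      = ∫ ω, (φA ω * (if D ω = r then (1:ℝ) else 0)
          + g ω * (if D ω = d then (1:ℝ) else 0)) ∂P := by
    refine integral_congr_ae ?_
    filter_upwards [hff'] with ω hω
    by_cases hDr : D ω = r
    · have hDd : ¬ D ω = d := by rw [hDr]; exact hrne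
      have hYeq : Yobs ω = f' ω := by
        rw [← hω]
        rcases hrd with ⟨h1, h2⟩ | ⟨h1, h2⟩
        · subst h1; subst h2
          rw [hYobs ω, hDr]
          norm_num
        · subst h1; subst h2
          rw [hYobs ω, hDr]
          norm_num
      simp only [hφAdef, hwdef, if_pos hDr, if_neg hDd]
      rw [hYeq]
      ring
    · simp only [if_neg hDr]
      ring
  rw [hLHS, integral_add hAint hBint]
  have hA1 : ∫ ω, φA ω * (if D ω = r then (1:ℝ) else 0) ∂P
      = ∫ ω, φA ω * pscore p₁ r ω ∂P := hKEYj r hr01 φA hφAm hφAi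
  have hA2 : ∫ ω, φA ω * pscore p₁ r ω ∂P
      = ∫ ω, (f' ω - g ω) * pscore p₁ d ω ∂P := by
    refine integral_congr_ae ?_
    filter_upwards [hcs] with ω hω
    have hne0 : pscore p₁ r ω ≠ 0 := by linarith
    simp only [hφAdef, hwdef]
    rw [mul_assoc, div_mul_cancel₀ _ hne0]
  have hA3 : ∫ ω, (f' ω - g ω) * pscore p₁ d ω ∂P
      = ∫ ω, f' ω * pscore p₁ d ω ∂P - ∫ ω, g ω * pscore p₁ d ω ∂P := by
    rw [← integral_sub hfqi hgqi]
    refine integral_congr_ae (ae_of_all _ fun ω => ?_)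
    ring
  have hB1 : ∫ ω, g ω * (if D ω = d then (1:ℝ) else 0) ∂P
      = ∫ ω, g ω * pscore p₁ d ω ∂P :=
    hKEYj d hd01 g hgm₂ hgint
  have hRHS : ∫ ω, Y r ω * (if D ω = d then (1:ℝ) else 0) ∂P
      = ∫ ω, f' ω * pscore p₁ d ω ∂P := by
    have e1 : ∫ ω, Y r ω * (if D ω = d then (1:ℝ) else 0) ∂P
        = ∫ ω, f' ω * (if D ω = d then (1:ℝ) else 0) ∂P := by
      refine integral_congr_ae ?_
      filter_upwards [hff'] with ω hω
      rw [hω]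
    rw [e1]
    exact hKEYj d hd01 f' hf'm₂ hf'int
  rw [hA1, hA2, hA3, hB1, hRHS]
  ring
end

section
/- (Double robustness of the equilibrium-reference AIPW formula against outcome misspecification.) Assume ignorability for Y(0) and ignorability for Y(1). Then for each d ∈ {0,1} and for EVERY integrable 𝒢-measurable function g : Ω → ℝ, E[(Y^obs − g)·p_d + 𝟙{D = d}·g] = E[Y(2)·𝟙{D = d}]; that is, the AIPW counterfactual formula recovers E[Y(2) | D = d] even when the outcome regression g is arbitrary, provided the propensity score is the true one. -/
open MeasureTheory ProbabilityTheory

section Aux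
open Set

variable {Ω : Type*} {𝒢 : MeasurableSpace Ω} [mΩ : MeasurableSpace Ω] [StandardBorelSpace Ω]
  {μ : Measure Ω} [IsProbabilityMeasure μ]
  (h𝒢le : 𝒢 ≤ mΩ)
  {D : Ω → ℕ} (hD : Measurable D)

lemma nat_top_eq_generateFrom_singletons :
    (inferInstance : MeasurableSpace ℕ) = .generateFrom (Set.range fun n => ({n} : Set ℕ)) := by
  refine le_antisymm (fun s _ => ?_) le_top
  have hs : s = ⋃ n ∈ s, ({n} : Set ℕ) := by ext; simp
  rw [hs]
  exact .biUnion (Set.to_countable s)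
    fun n _ => MeasurableSpace.measurableSet_generateFrom ⟨n, rfl⟩

lemma bdd_mul_integrable {Y : Ω → ℝ} (hY : Integrable Y μ) {b : Ω → ℝ}
    (hb : AEStronglyMeasurable b μ) (hbd : ∀ ω, |b ω| ≤ 1) :
    Integrable (fun ω => Y ω * b ω) μ := by
  refine hY.abs.mono' (hY.1.mul hb) (Filter.Eventually.of_forall fun ω => ?_)
  rw [Real.norm_eq_abs, abs_mul]
  calc |Y ω| * |b ω| ≤ |Y ω| * 1 := by gcongr; exact hbd ω
  _ = |Y ω| := mul_one _

include hD in
lemma meas_ind (d : ℕ) : Measurable (fun ω => if D ω = d then (1:ℝ) else 0) :=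
  Measurable.ite (hD (measurableSet_singleton d)) measurable_const measurable_const

lemma abs_ind_le (d : ℕ) (ω : Ω) : |if D ω = d then (1:ℝ) else 0| ≤ 1 := by
  split <;> simp

include h𝒢le hD in
lemma crux {Y : Ω → ℝ} (hYint : Integrable Y μ)
    (hig : CondIndepFun 𝒢 h𝒢le Y D μ) (d : ℕ) :
    ∀ᵐ ω ∂μ, ∫ y, Y y * (if D y = d then (1:ℝ) else 0) ∂(condExpKernel μ 𝒢 ω)
      = (∫ y, Y y ∂(condExpKernel μ 𝒢 ω)) * (condExpKernel μ 𝒢 ω (D ⁻¹' {d})).toReal := by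
  let κ := condExpKernel μ 𝒢
  have hκ : ∀ ω, κ ω = condExpKernel μ 𝒢 ω := fun _ => rfl
  set Y' : Ω → ℝ := hYint.1.mk Y with hY'
  have hY'm : StronglyMeasurable Y' := hYint.1.stronglyMeasurable_mk
  have hYY' : Y =ᵐ[μ] Y' := hYint.1.ae_eq_mk
  set N : Set Ω := toMeasurable μ {ω | Y ω ≠ Y' ω} with hN
  have hNm : MeasurableSet N := measurableSet_toMeasurable _ _
  have hNnull : μ N = 0 := by
    rw [measure_toMeasurable]; exact ae_iff.mp hYY'
  have hsubN : {ω | Y ω ≠ Y' ω} ⊆ N := subset_toMeasurable _ _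
  -- the independence of the generating sets, a.e. uniformly
  have hig' : ∀ (q : ℚ) (n : ℕ), ∀ᵐ ω ∂(μ.trim h𝒢le),
      κ ω (Y ⁻¹' (Set.Iic (q : ℝ)) ∩ D ⁻¹' {n})
        = κ ω (Y ⁻¹' (Set.Iic (q : ℝ))) * κ ω (D ⁻¹' {n}) :=
    fun q n => hig _ _ ⟨Set.Iic (q:ℝ), measurableSet_Iic, rfl⟩ ⟨{n}, measurableSet_singleton n, rfl⟩
  have hb : ∀ᵐ ω ∂μ, ∀ (q : ℚ) (n : ℕ),
      κ ω (Y ⁻¹' (Set.Iic (q : ℝ)) ∩ D ⁻¹' {n})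
        = κ ω (Y ⁻¹' (Set.Iic (q : ℝ))) * κ ω (D ⁻¹' {n}) :=
    ae_of_ae_trim h𝒢le (ae_all_iff.mpr fun q => ae_all_iff.mpr fun n => hig' q n)
  -- the kernel gives no mass to N, a.e.
  have hNce : μ⟦N | 𝒢⟧ =ᵐ[μ] 0 := by
    have h0 : N.indicator (fun _ => (1:ℝ)) =ᵐ[μ] 0 := by
      have : ∀ᵐ ω ∂μ, ω ∉ N := by
        rw [ae_iff]; simpa using hNnull
      filter_upwards [this] with ω hω
      simp [Set.indicator_of_notMem hω]
    exact (condExp_congr_ae h0).trans (by simp)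
  have hκN : ∀ᵐ ω ∂μ, κ ω N = 0 := by
    filter_upwards [(condExpKernel_ae_eq_condExp h𝒢le hNm).trans hNce] with ω hω
    simp only [Pi.zero_apply] at hω
    have := ENNReal.toReal_eq_zero_iff _ |>.mp hω
    rcases this with h | h
    · exact h
    · exact absurd h (measure_ne_top _ _)
  filter_upwards [hb, hκN] with ω hω hωN
  haveI : IsProbabilityMeasure (κ ω) := by
    infer_instance
  have hae : Y =ᵐ[κ ω] Y' := by
    refine ae_iff.mpr (measure_mono_null ?_ hωN)
    exact fun x hx => hsubN hx
  have hmeq : ∀ (A B : Set Ω), A ⊆ B ∪ N → B ⊆ A ∪ N → κ ω A = κ ω B := by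
    intro A B h1 h2
    have key : ∀ (C E : Set Ω), C ⊆ E ∪ N → κ ω C ≤ κ ω E := by
      intro C E h
      calc κ ω C ≤ κ ω (E ∪ N) := measure_mono h
        _ ≤ κ ω E + κ ω N := measure_union_le _ _
        _ = κ ω E := by rw [hωN, add_zero]
    exact le_antisymm (key _ _ h1) (key _ _ h2)
  have hsetc : ∀ (s : Set ℝ) (t : Set Ω), κ ω (Y' ⁻¹' s ∩ t) = κ ω (Y ⁻¹' s ∩ t) := by
    intro s t
    refine hmeq _ _ (fun x hx => ?_) (fun x hx => ?_)
    · by_cases hxy : Y x = Y' x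
      · exact Or.inl ⟨by rw [Set.mem_preimage, hxy]; exact hx.1, hx.2⟩
      · exact Or.inr (hsubN hxy)
    · by_cases hxy : Y x = Y' x
      · exact Or.inl ⟨by rw [Set.mem_preimage, ← hxy]; exact hx.1, hx.2⟩
      · exact Or.inr (hsubN hxy)
  have hsetc' : ∀ (s : Set ℝ), κ ω (Y' ⁻¹' s) = κ ω (Y ⁻¹' s) := by
    intro s
    have := hsetc s Set.univ
    simpa using this
  -- IndepFun Y' D under κ ω
  have hIndepSets : IndepSets (Set.preimage Y' '' (⋃ a : ℚ, {Set.Iic (a : ℝ)}))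
      (Set.preimage D '' (Set.range fun n => ({n} : Set ℕ))) (κ ω) := by
    rintro t1 t2 ⟨s1, hs1, rfl⟩ ⟨s2, hs2, rfl⟩
    simp only [Set.mem_iUnion, Set.mem_singleton_iff] at hs1
    obtain ⟨q, rfl⟩ := hs1
    obtain ⟨n, rfl⟩ := hs2
    refine Filter.Eventually.of_forall fun a => ?_
    simp only [Kernel.const_apply]
    rw [hsetc, hsetc']
    exact hω q n
  have hgen1 : MeasurableSpace.comap Y' inferInstance
      = MeasurableSpace.generateFrom (Set.preimage Y' '' (⋃ a : ℚ, {Set.Iic (a : ℝ)})) := by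
    conv_lhs => rw [BorelSpace.measurable_eq (α := ℝ), Real.borel_eq_generateFrom_Iic_rat]
    rw [MeasurableSpace.comap_generateFrom]
  have hgen2 : MeasurableSpace.comap D inferInstance
      = MeasurableSpace.generateFrom
        (Set.preimage D '' (Set.range fun n => ({n} : Set ℕ))) := by
    conv_lhs => rw [nat_top_eq_generateFrom_singletons]
    rw [MeasurableSpace.comap_generateFrom]
  have hpi2 : IsPiSystem (Set.range fun n => ({n} : Set ℕ)) := by
    rintro _ ⟨a, rfl⟩ _ ⟨b, rfl⟩ hab
    obtain ⟨x, hxa, hxb⟩ := hab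
    simp only [Set.mem_singleton_iff] at hxa hxb
    subst hxa
    subst hxb
    exact ⟨x, (Set.inter_self _).symm⟩
  have hindep : Indep (MeasurableSpace.comap Y' inferInstance)
      (MeasurableSpace.comap D inferInstance) (κ ω) :=
    IndepSets.indep (hY'm.measurable.comap_le) (hD.comap_le)
      (Real.isPiSystem_Iic_rat.comap Y') (hpi2.comap D) hgen1 hgen2 hIndepSets
  have hIF : IndepFun Y' D (κ ω) := hindep
  have hφ : Measurable (fun n : ℕ => if n = d then (1:ℝ) else 0) := measurable_from_top
  have hIF2 : IndepFun Y' ((fun n : ℕ => if n = d then (1:ℝ) else 0) ∘ D) (κ ω) :=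
    hIF.comp measurable_id hφ
  have hint_ind : ∫ y, (if D y = d then (1:ℝ) else 0) ∂(κ ω)
      = (κ ω (D ⁻¹' {d})).toReal := by
    have hrw : (fun y => if D y = d then (1:ℝ) else 0)
        = (D ⁻¹' {d}).indicator (fun _ => (1:ℝ)) := by
      ext y
      by_cases h : D y = d <;> simp [Set.indicator_apply, Set.mem_preimage, h]
    rw [hrw, integral_indicator_const (1:ℝ) (hD (measurableSet_singleton d)), smul_eq_mul, mul_one, measureReal_def]
  calc ∫ y, Y y * (if D y = d then (1:ℝ) else 0) ∂(κ ω)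
      = ∫ y, Y' y * (if D y = d then (1:ℝ) else 0) ∂(κ ω) := by
        refine integral_congr_ae ?_
        filter_upwards [hae] with x hx
        rw [hx]
    _ = (∫ y, Y' y ∂(κ ω)) * ∫ y, (if D y = d then (1:ℝ) else 0) ∂(κ ω) :=
        hIF2.integral_fun_mul_eq_mul_integral hY'm.aestronglyMeasurable (hφ.comp hD).aestronglyMeasurable
    _ = (∫ y, Y y ∂(κ ω)) * (κ ω (D ⁻¹' {d})).toReal := by
        rw [integral_congr_ae hae.symm, hint_ind]

include h𝒢le hD in
lemma L2 {g : Ω → ℝ} (hgm : Measurable[𝒢] g) (hgint : Integrable g μ) (d : ℕ) :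
    ∫ ω, g ω * (if D ω = d then (1:ℝ) else 0) ∂μ
      = ∫ ω, g ω * (condExpKernel μ 𝒢 ω (D ⁻¹' {d})).toReal ∂μ := by
  have hfg : Integrable (g * fun ω => if D ω = d then (1:ℝ) else 0) μ :=
    bdd_mul_integrable hgint (meas_ind hD d).aestronglyMeasurable (abs_ind_le (D := D) d)
  have hii : Integrable (fun ω => if D ω = d then (1:ℝ) else 0) μ := by
    refine (integrable_const (1:ℝ)).mono' (meas_ind hD d).aestronglyMeasurable ?_
    exact Filter.Eventually.of_forall fun ω => by
      rw [Real.norm_eq_abs]; simpa using abs_ind_le (D := D) d ω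
  have hsm : StronglyMeasurable[𝒢] g := hgm.stronglyMeasurable
  have h1 := condExp_mul_of_stronglyMeasurable_left hsm hfg hii
  have h2 : (μ[fun ω => if D ω = d then (1:ℝ) else 0|𝒢])
      =ᵐ[μ] fun ω => (condExpKernel μ 𝒢 ω (D ⁻¹' {d})).toReal := by
    have hrw : (fun ω => if D ω = d then (1:ℝ) else 0)
        = (D ⁻¹' {d}).indicator (fun _ => (1:ℝ)) := by
      ext y
      by_cases h : D y = d <;> simp [Set.indicator_apply, Set.mem_preimage, h]
    rw [hrw]
    exact (condExpKernel_ae_eq_condExp h𝒢le (hD (measurableSet_singleton d))).symm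
  calc ∫ ω, g ω * (if D ω = d then (1:ℝ) else 0) ∂μ
      = ∫ ω, (μ[g * fun ω => if D ω = d then (1:ℝ) else 0|𝒢]) ω ∂μ :=
        (integral_condExp h𝒢le).symm
    _ = ∫ ω, g ω * (condExpKernel μ 𝒢 ω (D ⁻¹' {d})).toReal ∂μ := by
        refine integral_congr_ae ?_
        filter_upwards [h1, h2] with ω hω1 hω2
        rw [hω1]
        simp only [Pi.mul_apply]
        rw [hω2]

include h𝒢le hD in
lemma key {Y : Ω → ℝ} (hYint : Integrable Y μ) (hig : CondIndepFun 𝒢 h𝒢le Y D μ)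
    {c : Ω → ℝ} (hc : Measurable[𝒢] c) (hc1 : ∀ ω, |c ω| ≤ 1) (d : ℕ) :
    ∫ ω, Y ω * (if D ω = d then (1:ℝ) else 0) * c ω ∂μ
      = ∫ ω, (∫ y, Y y ∂(condExpKernel μ 𝒢 ω))
          * (condExpKernel μ 𝒢 ω (D ⁻¹' {d})).toReal * c ω ∂μ := by
  have hcm : AEStronglyMeasurable c μ :=
    ((hc.mono h𝒢le le_rfl).stronglyMeasurable).aestronglyMeasurable
  have hYi : Integrable (fun ω => Y ω * (if D ω = d then (1:ℝ) else 0)) μ :=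
    bdd_mul_integrable hYint (meas_ind hD d).aestronglyMeasurable (abs_ind_le (D := D) d)
  have hfg : Integrable (c * fun ω => Y ω * (if D ω = d then (1:ℝ) else 0)) μ := by
    have h := bdd_mul_integrable hYi hcm hc1
    exact h.congr (Filter.Eventually.of_forall fun ω => by simp [Pi.mul_apply, mul_comm])
  have hcsm : StronglyMeasurable[𝒢] c := hc.stronglyMeasurable
  have h1 := condExp_mul_of_stronglyMeasurable_left hcsm hfg hYi
  have h2 := condExp_ae_eq_integral_condExpKernel h𝒢le hYi
  have h3 := crux h𝒢le hD hYint hig d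
  calc ∫ ω, Y ω * (if D ω = d then (1:ℝ) else 0) * c ω ∂μ
      = ∫ ω, (c * fun ω => Y ω * (if D ω = d then (1:ℝ) else 0)) ω ∂μ := by
        refine integral_congr_ae (Filter.Eventually.of_forall fun ω => ?_)
        simp only [Pi.mul_apply]; ring
    _ = ∫ ω, (μ[c * fun ω => Y ω * (if D ω = d then (1:ℝ) else 0)|𝒢]) ω ∂μ :=
        (integral_condExp h𝒢le).symm
    _ = ∫ ω, (∫ y, Y y ∂(condExpKernel μ 𝒢 ω))
          * (condExpKernel μ 𝒢 ω (D ⁻¹' {d})).toReal * c ω ∂μ := by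
        refine integral_congr_ae ?_
        filter_upwards [h1, h2, h3] with ω hω1 hω2 hω3
        rw [hω1]
        simp only [Pi.mul_apply]
        rw [hω2, hω3]
        ring

include h𝒢le hD in
lemma stmt_aux (hD01 : ∀ ω, D ω = 0 ∨ D ω = 1)
    {Y : ℕ → Ω → ℝ} (hY0int : Integrable (Y 0) μ) (hY1int : Integrable (Y 1) μ)
    {Yobs : Ω → ℝ} (hYobs : ∀ ω, Yobs ω = (D ω : ℝ) * Y 1 ω + (1 - (D ω : ℝ)) * Y 0 ω)
    {p₁ : Ω → ℝ} (hp₁meas : Measurable[𝒢] p₁)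
    (hp₁ : p₁ =ᵐ[μ] μ[fun ω => (D ω : ℝ) | 𝒢])
    (hp₁0 : ∀ ω, 0 ≤ p₁ ω) (hp₁1 : ∀ ω, p₁ ω ≤ 1)
    (hig0 : CondIndepFun 𝒢 h𝒢le (Y 0) D μ)
    (hig1 : CondIndepFun 𝒢 h𝒢le (Y 1) D μ)
    {Y2 : Ω → ℝ} (hY2 : ∀ ω, Y2 ω = p₁ ω * Y 1 ω + (1 - p₁ ω) * Y 0 ω)
    (d : ℕ) (hd : d = 0 ∨ d = 1)
    (g : Ω → ℝ) (hgm : Measurable[𝒢] g) (hgint : Integrable g μ) :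
    ∫ ω, (Yobs ω - g ω) * pscore p₁ d ω + (if D ω = d then (1:ℝ) else 0) * g ω ∂μ
      = ∫ ω, Y2 ω * (if D ω = d then (1:ℝ) else 0) ∂μ := by
  let c : Ω → ℝ := fun ω => pscore p₁ d ω
  have hcdef : c = fun ω => pscore p₁ d ω := rfl
  have hcm : Measurable[𝒢] c := by
    by_cases h1 : d = 1 <;> simp only [hcdef, pscore, h1, if_true, if_false]
    · exact hp₁meas
    · exact measurable_const.sub hp₁meas
  have habsp₁ : ∀ ω, |p₁ ω| ≤ 1 := fun ω => abs_le.mpr ⟨by linarith [hp₁0 ω], hp₁1 ω⟩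
  have habsp₀ : ∀ ω, |1 - p₁ ω| ≤ 1 := fun ω =>
    abs_le.mpr ⟨by linarith [hp₁1 ω], by linarith [hp₁0 ω]⟩
  have habsc : ∀ ω, |c ω| ≤ 1 := by
    intro ω
    by_cases h1 : d = 1 <;> simp only [hcdef, pscore, h1, if_true, if_false]
    · exact habsp₁ ω
    · exact habsp₀ ω
  have hcm' : AEStronglyMeasurable c μ :=
    ((hcm.mono h𝒢le le_rfl).stronglyMeasurable).aestronglyMeasurable
  have hp₁m' : AEStronglyMeasurable p₁ μ :=
    ((hp₁meas.mono h𝒢le le_rfl).stronglyMeasurable).aestronglyMeasurable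
  have hp₀m' : AEStronglyMeasurable (fun ω => 1 - p₁ ω) μ :=
    (aestronglyMeasurable_const.sub hp₁m')
  have hA1 : MeasurableSet[mΩ] (D ⁻¹' {1}) := hD (measurableSet_singleton 1)
  -- kernel probabilities agree with the propensity score
  have hQ1 : (fun ω => (condExpKernel μ 𝒢 ω (D ⁻¹' {1})).toReal) =ᵐ[μ] p₁ := by
    have hpoint : ∀ ω, (D ⁻¹' {1}).indicator (fun _ => (1:ℝ)) ω = (D ω : ℝ) := by
      intro ω; rcases hD01 ω with h | h <;> simp [Set.indicator_apply, h]
    refine (condExpKernel_ae_eq_condExp h𝒢le hA1).trans ?_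
    exact (condExp_congr_ae (Filter.Eventually.of_forall hpoint)).trans hp₁.symm
  have hQ0 : (fun ω => (condExpKernel μ 𝒢 ω (D ⁻¹' {0})).toReal) =ᵐ[μ]
      fun ω => 1 - p₁ ω := by
    have hset : D ⁻¹' {0} = (D ⁻¹' {1})ᶜ := by
      ext ω; rcases hD01 ω with h | h <;> simp [h]
    filter_upwards [hQ1] with ω hω
    rw [hset, prob_compl_eq_one_sub hA1,
      ENNReal.toReal_sub_of_le prob_le_one ENNReal.one_ne_top, ENNReal.toReal_one, hω]
  have hQd : (fun ω => (condExpKernel μ 𝒢 ω (D ⁻¹' {d})).toReal) =ᵐ[μ] c := by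
    rcases hd with rfl | rfl
    · refine hQ0.trans (Filter.Eventually.of_forall fun ω => ?_)
      simp [hcdef, pscore]
    · refine hQ1.trans (Filter.Eventually.of_forall fun ω => ?_)
      simp [hcdef, pscore]
  -- pointwise decomposition of the left-hand side
  have hpt : ∀ ω, (Yobs ω - g ω) * pscore p₁ d ω + (if D ω = d then (1:ℝ) else 0) * g ω
      = Y 1 ω * (if D ω = 1 then (1:ℝ) else 0) * c ω
        + Y 0 ω * (if D ω = 0 then (1:ℝ) else 0) * c ω
        + (g ω * (if D ω = d then (1:ℝ) else 0) - g ω * c ω) := by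
    intro ω
    have hcc : pscore p₁ d ω = c ω := rfl
    rw [hcc, hYobs ω]
    rcases hD01 ω with h | h <;> simp only [h, Nat.cast_zero, Nat.cast_one] <;> norm_num <;> ring
  -- integrability of all pieces
  have hT1int : Integrable (fun ω => Y 1 ω * (if D ω = 1 then (1:ℝ) else 0) * c ω) μ :=
    bdd_mul_integrable
      (bdd_mul_integrable hY1int (meas_ind hD 1).aestronglyMeasurable (abs_ind_le (D := D) 1))
      hcm' habsc
  have hT2int : Integrable (fun ω => Y 0 ω * (if D ω = 0 then (1:ℝ) else 0) * c ω) μ :=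
    bdd_mul_integrable
      (bdd_mul_integrable hY0int (meas_ind hD 0).aestronglyMeasurable (abs_ind_le (D := D) 0))
      hcm' habsc
  have hT3int : Integrable (fun ω => g ω * (if D ω = d then (1:ℝ) else 0)) μ :=
    bdd_mul_integrable hgint (meas_ind hD d).aestronglyMeasurable (abs_ind_le (D := D) d)
  have hT4int : Integrable (fun ω => g ω * c ω) μ := bdd_mul_integrable hgint hcm' habsc
  have hU1int : Integrable (fun ω => Y 1 ω * (if D ω = d then (1:ℝ) else 0) * p₁ ω) μ :=
    bdd_mul_integrable
      (bdd_mul_integrable hY1int (meas_ind hD d).aestronglyMeasurable (abs_ind_le (D := D) d))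
      hp₁m' habsp₁
  have hU2int : Integrable
      (fun ω => Y 0 ω * (if D ω = d then (1:ℝ) else 0) * (1 - p₁ ω)) μ :=
    bdd_mul_integrable
      (bdd_mul_integrable hY0int (meas_ind hD d).aestronglyMeasurable (abs_ind_le (D := D) d))
      hp₀m' habsp₀
  -- the augmentation terms cancel
  have hT34 : ∫ ω, g ω * (if D ω = d then (1:ℝ) else 0) ∂μ = ∫ ω, g ω * c ω ∂μ := by
    rw [L2 h𝒢le hD hgm hgint d]
    refine integral_congr_ae ?_
    filter_upwards [hQd] with ω hω
    rw [hω]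
  -- the main terms via conditional independence
  have hT1 : ∫ ω, Y 1 ω * (if D ω = 1 then (1:ℝ) else 0) * c ω ∂μ
      = ∫ ω, (∫ y, Y 1 y ∂(condExpKernel μ 𝒢 ω)) * p₁ ω * c ω ∂μ := by
    rw [key h𝒢le hD hY1int hig1 hcm habsc 1]
    refine integral_congr_ae ?_
    filter_upwards [hQ1] with ω hω
    rw [hω]
  have hT2 : ∫ ω, Y 0 ω * (if D ω = 0 then (1:ℝ) else 0) * c ω ∂μ
      = ∫ ω, (∫ y, Y 0 y ∂(condExpKernel μ 𝒢 ω)) * (1 - p₁ ω) * c ω ∂μ := by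
    rw [key h𝒢le hD hY0int hig0 hcm habsc 0]
    refine integral_congr_ae ?_
    filter_upwards [hQ0] with ω hω
    rw [hω]
  have hU1 : ∫ ω, Y 1 ω * (if D ω = d then (1:ℝ) else 0) * p₁ ω ∂μ
      = ∫ ω, (∫ y, Y 1 y ∂(condExpKernel μ 𝒢 ω)) * c ω * p₁ ω ∂μ := by
    rw [key h𝒢le hD hY1int hig1 hp₁meas habsp₁ d]
    refine integral_congr_ae ?_
    filter_upwards [hQd] with ω hω
    rw [hω]
  have hU2 : ∫ ω, Y 0 ω * (if D ω = d then (1:ℝ) else 0) * (1 - p₁ ω) ∂μ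
      = ∫ ω, (∫ y, Y 0 y ∂(condExpKernel μ 𝒢 ω)) * c ω * (1 - p₁ ω) ∂μ := by
    rw [key h𝒢le hD hY0int hig0 (c := fun ω => 1 - p₁ ω) (measurable_const.sub hp₁meas) habsp₀ d]
    refine integral_congr_ae ?_
    filter_upwards [hQd] with ω hω
    rw [hω]
  -- pointwise decomposition of the right-hand side
  have hptR : ∀ ω, Y2 ω * (if D ω = d then (1:ℝ) else 0)
      = Y 1 ω * (if D ω = d then (1:ℝ) else 0) * p₁ ω
        + Y 0 ω * (if D ω = d then (1:ℝ) else 0) * (1 - p₁ ω) := by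
    intro ω; rw [hY2 ω]; ring
  calc ∫ ω, (Yobs ω - g ω) * pscore p₁ d ω + (if D ω = d then (1:ℝ) else 0) * g ω ∂μ
      = ∫ ω, (Y 1 ω * (if D ω = 1 then (1:ℝ) else 0) * c ω
          + Y 0 ω * (if D ω = 0 then (1:ℝ) else 0) * c ω)
          + (g ω * (if D ω = d then (1:ℝ) else 0) - g ω * c ω) ∂μ := by
        refine integral_congr_ae (Filter.Eventually.of_forall fun ω => ?_)
        dsimp only
        rw [hpt ω]
    _ = (∫ ω, Y 1 ω * (if D ω = 1 then (1:ℝ) else 0) * c ω ∂μ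
          + ∫ ω, Y 0 ω * (if D ω = 0 then (1:ℝ) else 0) * c ω ∂μ)
        + (∫ ω, g ω * (if D ω = d then (1:ℝ) else 0) ∂μ - ∫ ω, g ω * c ω ∂μ) := by
        have e1 := integral_add hT1int hT2int
        have e2 := integral_sub hT3int hT4int
        have e3 := integral_add (μ := μ)
          (f := fun x => (Y 1 x * if D x = 1 then (1:ℝ) else 0) * c x
                + (Y 0 x * if D x = 0 then (1:ℝ) else 0) * c x)
          (g := fun x => g x * (if D x = d then (1:ℝ) else 0) - g x * c x)
          (hT1int.add hT2int) (hT3int.sub hT4int)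
        rw [← e1, ← e2, ← e3]
    _ = ∫ ω, (∫ y, Y 1 y ∂(condExpKernel μ 𝒢 ω)) * p₁ ω * c ω ∂μ
          + ∫ ω, (∫ y, Y 0 y ∂(condExpKernel μ 𝒢 ω)) * (1 - p₁ ω) * c ω ∂μ := by
        rw [hT1, hT2, hT34]; ring
    _ = ∫ ω, (∫ y, Y 1 y ∂(condExpKernel μ 𝒢 ω)) * c ω * p₁ ω ∂μ
          + ∫ ω, (∫ y, Y 0 y ∂(condExpKernel μ 𝒢 ω)) * c ω * (1 - p₁ ω) ∂μ := by
        congr 1 <;> exact integral_congr_ae (Filter.Eventually.of_forall fun ω => by ring)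
    _ = ∫ ω, Y 1 ω * (if D ω = d then (1:ℝ) else 0) * p₁ ω ∂μ
          + ∫ ω, Y 0 ω * (if D ω = d then (1:ℝ) else 0) * (1 - p₁ ω) ∂μ := by
        rw [hU1, hU2]
    _ = ∫ ω, Y2 ω * (if D ω = d then (1:ℝ) else 0) ∂μ := by
        rw [← integral_add hU1int hU2int]
        refine integral_congr_ae (Filter.Eventually.of_forall fun ω => ?_)
        dsimp only
        rw [hptR ω]

end Aux


/-- double robustness of the equilibrium-reference AIPW formula against outcome
misspecification: for every `d ∈ {0,1}` and EVERY integrable `𝒢`-measurable `g`, the AIPW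
formula recovers `E[Y(2)·𝟙{D = d}]`, provided the propensity score is the true one. -/
theorem stmt_10
    {Ω 𝒳 : Type*} (𝒢 : MeasurableSpace Ω) [mΩ : MeasurableSpace Ω] [StandardBorelSpace Ω]
    [MeasurableSpace 𝒳]
    (P : Measure Ω) [IsProbabilityMeasure P]
    (X : Ω → 𝒳) (hX : Measurable X)
    (h𝒢 : 𝒢 = MeasurableSpace.comap X inferInstance)
    (h𝒢le : 𝒢 ≤ mΩ)
    (D : Ω → ℕ) (hD : Measurable D) (hD01 : ∀ ω, D ω = 0 ∨ D ω = 1)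
    (hD1pos : 0 < P {ω | D ω = 1}) (hD1lt : P {ω | D ω = 1} < 1)
    (Y : ℕ → Ω → ℝ) (hY0int : Integrable (Y 0) P) (hY1int : Integrable (Y 1) P)
    (Yobs : Ω → ℝ)
    (hYobs : ∀ ω, Yobs ω = (D ω : ℝ) * Y 1 ω + (1 - (D ω : ℝ)) * Y 0 ω)
    (p₁ : Ω → ℝ) (hp₁meas : Measurable[𝒢] p₁)
    (hp₁ : p₁ =ᵐ[P] P[fun ω => (D ω : ℝ) | 𝒢])
    (hp₁0 : ∀ ω, 0 ≤ p₁ ω) (hp₁1 : ∀ ω, p₁ ω ≤ 1)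
    (hig0 : CondIndepFun 𝒢 h𝒢le (Y 0) D (μ := P))
    (hig1 : CondIndepFun 𝒢 h𝒢le (Y 1) D (μ := P))
    (Y2 : Ω → ℝ) (hY2 : ∀ ω, Y2 ω = p₁ ω * Y 1 ω + (1 - p₁ ω) * Y 0 ω) :
    ∀ d : ℕ, d = 0 ∨ d = 1 →
      ∀ g : Ω → ℝ, Measurable[𝒢] g → Integrable g P →
        ∫ ω, (Yobs ω - g ω) * pscore p₁ d ω + (if D ω = d then (1:ℝ) else 0) * g ω ∂P
          = ∫ ω, Y2 ω * (if D ω = d then (1:ℝ) else 0) ∂P := by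
  intro d hd g hgm hgint
  exact stmt_aux (mΩ := mΩ) (μ := P) h𝒢le hD hD01 hY0int hY1int hYobs hp₁meas hp₁ hp₁0 hp₁1
    hig0 hig1 hY2 d hd g hgm hgint
end
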